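/- arXiv:math/0603740 — 9 statements merged into one kernel-verified Lean document; each statement's English description precedes it below -/
import Mathlib

section
/- Let n ≥ 0 and m ≥ 1 be integers and let L(x_1,...,x_{n+m}) be the multilinear part of the free Lie algebra on x_1,...,x_{n+m} over a field of characteristic 0. The linear map i_{n,m} : L(x_1,...,x_{n+m}) → L(x_1,...,x_{n+m+1}) defined by i_{n,m}(P) = Σ_{i=1}^m P(x_1,...,x_{n+i-1}, [x_{n+i}, x_{n+m+1}], x_{n+i+1},...,x_{n+m}) is injective; more precisely it admits a linear retraction p_{n,m} with p_{n,m} ∘ i_{n,m} = id. -/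
open FreeAlgebra

attribute [local instance 100] LieRing.ofAssociativeRing

/-- The word `x_{σ(1)} ⋯ x_{σ(n)}` in the free associative algebra. -/
noncomputable def permWord (k : Type*) [Field k] (n : ℕ) (σ : Equiv.Perm (Fin n)) :
    FreeAlgebra k (Fin n) :=
  (List.ofFn fun j => FreeAlgebra.ι k (σ j)).prod

/-- The multilinear component of the free associative algebra on `n` generators. -/
noncomputable def multilinearPart (k : Type*) [Field k] (n : ℕ) :
    Submodule k (FreeAlgebra k (Fin n)) :=
  Submodule.span k (Set.range (permWord k n))

/-- The canonical Lie algebra morphism from the free Lie algebra to the free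
associative algebra (with commutator bracket). -/
noncomputable def toAssoc (k : Type*) [Field k] (n : ℕ) :
    FreeLieAlgebra k (Fin n) →ₗ⁅k⁆ FreeAlgebra k (Fin n) :=
  FreeLieAlgebra.lift k (FreeAlgebra.ι k)

/-- The multilinear part `L(x_1,…,x_n)` of the free Lie algebra: the elements whose
image in the free associative algebra is multilinear. -/
noncomputable def multilinearLie (k : Type*) [Field k] (n : ℕ) :
    Submodule k (FreeLieAlgebra k (Fin n)) :=
  (multilinearPart k n).comap (toAssoc k n).toLinearMap

/-- The substitution `x_{n+i} ↦ [x_{n+i}, x_{n+m+1}]` (all other generators are kept,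
via the inclusion `Fin (n+m) ↪ Fin (n+m+1)`), as a Lie algebra morphism
of free Lie algebras. -/
noncomputable def substBracket (k : Type*) [Field k] (n m : ℕ) (i : Fin m) :
    FreeLieAlgebra k (Fin (n + m)) →ₗ⁅k⁆ FreeLieAlgebra k (Fin (n + m + 1)) :=
  FreeLieAlgebra.lift k fun j : Fin (n + m) =>
    if (j : ℕ) = n + (i : ℕ) then
      ⁅FreeLieAlgebra.of k j.castSucc, FreeLieAlgebra.of k (Fin.last (n + m))⁆
    else FreeLieAlgebra.of k j.castSucc

/-- The map `i_{n,m}(P) = Σ_{i=1}^m P(x_1,…,[x_{n+i},x_{n+m+1}],…,x_{n+m})`. -/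
noncomputable def insertBracketMap (k : Type*) [Field k] (n m : ℕ) :
    FreeLieAlgebra k (Fin (n + m)) →ₗ[k] FreeLieAlgebra k (Fin (n + m + 1)) :=
  ∑ i : Fin m, (substBracket k n m i).toLinearMap


section Dual
variable (k : Type*) [Field k] {L : Type*} [LieRing L] [LieAlgebra k L]

/-- Dual numbers over a Lie algebra `L`: `L ⊕ εL` with `ε² = 0`. -/
def Dup (L : Type*) := L × L

instance : AddCommGroup (Dup L) := inferInstanceAs (AddCommGroup (L × L))
instance : Module k (Dup L) := inferInstanceAs (Module k (L × L))

instance : LieRing (Dup L) where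
  bracket x y := (⁅x.1, y.1⁆, ⁅x.1, y.2⁆ + ⁅x.2, y.1⁆)
  add_lie x y z := by
    obtain ⟨a, b⟩ := x; obtain ⟨c, d⟩ := y; obtain ⟨e, f⟩ := z
    refine Prod.ext (show ⁅a + c, e⁆ = ⁅a, e⁆ + ⁅c, e⁆ from add_lie a c e)
      (show ⁅a + c, f⁆ + ⁅b + d, e⁆ = ⁅a, f⁆ + ⁅b, e⁆ + (⁅c, f⁆ + ⁅d, e⁆) from ?_)
    simp only [add_lie]; abel
  lie_add x y z := by
    obtain ⟨a, b⟩ := x; obtain ⟨c, d⟩ := y; obtain ⟨e, f⟩ := z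
    refine Prod.ext (show ⁅a, c + e⁆ = ⁅a, c⁆ + ⁅a, e⁆ from lie_add a c e)
      (show ⁅a, d + f⁆ + ⁅b, c + e⁆ = ⁅a, d⁆ + ⁅b, c⁆ + (⁅a, f⁆ + ⁅b, e⁆) from ?_)
    simp only [lie_add]; abel
  lie_self x := by
    obtain ⟨a, b⟩ := x
    refine Prod.ext (show ⁅a, a⁆ = (0 : L) from lie_self a)
      (show ⁅a, b⁆ + ⁅b, a⁆ = (0 : L) from ?_)
    rw [← lie_skew a b]; abel
  leibniz_lie x y z := by
    obtain ⟨a, b⟩ := x; obtain ⟨c, d⟩ := y; obtain ⟨e, f⟩ := z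
    refine Prod.ext
      (show ⁅a, ⁅c, e⁆⁆ = ⁅⁅a, c⁆, e⁆ + ⁅c, ⁅a, e⁆⁆ from leibniz_lie a c e)
      (show ⁅a, ⁅c, f⁆ + ⁅d, e⁆⁆ + ⁅b, ⁅c, e⁆⁆ =
        ⁅⁅a, c⁆, f⁆ + ⁅⁅a, d⁆ + ⁅b, c⁆, e⁆ + (⁅c, ⁅a, f⁆ + ⁅b, e⁆⁆ + ⁅d, ⁅a, e⁆⁆) from ?_)
    simp only [lie_add, add_lie, lie_lie]; abel

instance : LieAlgebra k (Dup L) where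
  lie_smul c x y := by
    obtain ⟨a, b⟩ := x; obtain ⟨e, f⟩ := y
    refine Prod.ext (show ⁅a, c • e⁆ = c • ⁅a, e⁆ from lie_smul c a e)
      (show ⁅a, c • f⁆ + ⁅b, c • e⁆ = c • (⁅a, f⁆ + ⁅b, e⁆) from ?_)
    simp only [lie_smul, smul_add]

/-- Constructor for `Dup`. -/
def Dup.mk (a b : L) : Dup L := (a, b)

lemma Dup.lie_mk (a b c d : L) :
    ⁅Dup.mk a b, Dup.mk c d⁆ = Dup.mk ⁅a, c⁆ (⁅a, d⁆ + ⁅b, c⁆) := rfl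

lemma Dup.mk_fst (a b : L) : (Dup.mk a b).1 = a := rfl
lemma Dup.mk_snd (a b : L) : (Dup.mk a b).2 = b := rfl

lemma Dup.eq_mk (x : Dup L) : x = Dup.mk x.1 x.2 := rfl

variable (L) in
/-- First projection as a Lie algebra morphism. -/
def Dup.fstHom : Dup L →ₗ⁅k⁆ L where
  toFun x := x.1
  map_add' _ _ := rfl
  map_smul' _ _ := rfl
  map_lie' := rfl

end Dual

section Euler
variable (k : Type*) [Field k] (N : ℕ)

local notation "L" => FreeLieAlgebra k (Fin N)

/-- The comparison morphism into the dual numbers, `x_j ↦ x_j + ε x_j`. -/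
noncomputable def dupHom : L →ₗ⁅k⁆ Dup L :=
  FreeLieAlgebra.lift k fun j => Dup.mk (FreeLieAlgebra.of k j) (FreeLieAlgebra.of k j)

lemma fstHom_dupHom (x : L) : ((dupHom k N x : Dup L)).1 = x := by
  have h : (Dup.fstHom k L).comp (dupHom k N) = LieHom.id := by
    apply FreeLieAlgebra.hom_ext
    intro j
    simp [dupHom, Dup.fstHom, FreeLieAlgebra.lift_of_apply, Dup.mk_fst, Dup.mk]
    exact congrArg Prod.fst (show dupHom k N (FreeLieAlgebra.of k j)
        = Dup.mk (FreeLieAlgebra.of k j) (FreeLieAlgebra.of k j) from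
      FreeLieAlgebra.lift_of_apply _ j)
  exact LieHom.congr_fun h x

/-- The Euler derivation on the free Lie algebra, `x_j ↦ x_j` on generators. -/
noncomputable def euler : L →ₗ[k] L :=
  (LinearMap.snd k L L) ∘ₗ ((dupHom k N).toLinearMap : L →ₗ[k] Dup L)

lemma euler_apply (x : L) : euler k N x = ((dupHom k N x : Dup L)).2 := rfl

lemma euler_of (j : Fin N) : euler k N (FreeLieAlgebra.of k j) = FreeLieAlgebra.of k j := by
  rw [euler_apply]
  rw [show dupHom k N (FreeLieAlgebra.of k j)
      = Dup.mk (FreeLieAlgebra.of k j) (FreeLieAlgebra.of k j) from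
    FreeLieAlgebra.lift_of_apply _ j]
  rfl

lemma euler_lie (x y : L) :
    euler k N ⁅x, y⁆ = ⁅euler k N x, y⁆ + ⁅x, euler k N y⁆ := by
  have h := (dupHom k N).map_lie x y
  have h1 : (dupHom k N x : Dup _) = Dup.mk x (euler k N x) :=
    Prod.ext (fstHom_dupHom k N x) rfl
  have h2 : (dupHom k N y : Dup _) = Dup.mk y (euler k N y) :=
    Prod.ext (fstHom_dupHom k N y) rfl
  have h3 : (dupHom k N ⁅x, y⁆ : Dup _) = Dup.mk ⁅x, y⁆ (euler k N ⁅x, y⁆) :=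
    Prod.ext (fstHom_dupHom k N _) rfl
  rw [h1, h2, h3, Dup.lie_mk] at h
  have h4 := congrArg Prod.snd h
  rw [Dup.mk_snd, Dup.mk_snd] at h4
  rw [h4]; abel

end Euler

section Semidirect
variable (k : Type*) [Field k] (N : ℕ)

local notation "L" => FreeLieAlgebra k (Fin N)

/-- Semidirect product `L ⋊ k·E` where `E` is the Euler derivation. -/
def Sd := FreeLieAlgebra k (Fin N) × k

noncomputable instance : AddCommGroup (Sd k N) := inferInstanceAs (AddCommGroup (_ × k))
noncomputable instance : Module k (Sd k N) := inferInstanceAs (Module k (_ × k))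

/-- Constructor for `Sd`. -/
def Sd.mk (a : L) (s : k) : Sd k N := (a, s)

lemma flipE (x y : L) : ⁅x, euler k N y⁆ = -⁅euler k N y, x⁆ := by
  rw [← lie_skew]

lemma lie_smul' (t : k) (a b : FreeLieAlgebra k (Fin N)) : ⁅a, t • b⁆ = t • ⁅a, b⁆ :=
  lie_smul t a b

lemma smul_lie' (t : k) (a b : FreeLieAlgebra k (Fin N)) : ⁅t • a, b⁆ = t • ⁅a, b⁆ :=
  smul_lie t a b

noncomputable instance : LieRing (Sd k N) where
  bracket x y := (⁅x.1, y.1⁆ + x.2 • euler k N y.1 - y.2 • euler k N x.1, 0)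
  add_lie x y z := by
    obtain ⟨a, s⟩ := x; obtain ⟨c, t⟩ := y; obtain ⟨e, u⟩ := z
    refine Prod.ext (show ⁅a + c, e⁆ + (s + t) • euler k N e - u • euler k N (a + c)
        = ⁅a, e⁆ + s • euler k N e - u • euler k N a
          + (⁅c, e⁆ + t • euler k N e - u • euler k N c) from ?_)
      (show (0 : k) = 0 + 0 from (add_zero 0).symm)
    simp only [add_lie, map_add, add_smul, smul_add]; abel
  lie_add x y z := by
    obtain ⟨a, s⟩ := x; obtain ⟨c, t⟩ := y; obtain ⟨e, u⟩ := z
    refine Prod.ext (show ⁅a, c + e⁆ + s • euler k N (c + e) - (t + u) • euler k N a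
        = ⁅a, c⁆ + s • euler k N c - t • euler k N a
          + (⁅a, e⁆ + s • euler k N e - u • euler k N a) from ?_)
      (show (0 : k) = 0 + 0 from (add_zero 0).symm)
    simp only [lie_add, map_add, add_smul, smul_add]; abel
  lie_self x := by
    obtain ⟨a, s⟩ := x
    exact Prod.ext (show ⁅a, a⁆ + s • euler k N a - s • euler k N a = 0 by simp) rfl
  leibniz_lie x y z := by
    obtain ⟨a, s⟩ := x; obtain ⟨b, t⟩ := y; obtain ⟨c, u⟩ := z
    refine Prod.ext ?_ (show (0 : k) = 0 + 0 from (add_zero 0).symm)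
    show ⁅a, ⁅b, c⁆ + t • euler k N c - u • euler k N b⁆
        + s • euler k N (⁅b, c⁆ + t • euler k N c - u • euler k N b)
        - (0 : k) • euler k N a
      = ⁅⁅a, b⁆ + s • euler k N b - t • euler k N a, c⁆
          + (0 : k) • euler k N c
          - u • euler k N (⁅a, b⁆ + s • euler k N b - t • euler k N a)
        + (⁅b, ⁅a, c⁆ + s • euler k N c - u • euler k N a⁆
          + t • euler k N (⁅a, c⁆ + s • euler k N c - u • euler k N a)
          - (0 : k) • euler k N b)
    simp only [lie_add, add_lie, lie_sub, sub_lie, lie_smul', smul_lie', map_add, map_sub,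
      map_smul, euler_lie, smul_add, smul_sub, smul_smul, zero_smul, lie_lie, flipE,
      smul_neg, neg_neg, mul_comm]
    abel

noncomputable instance : LieAlgebra k (Sd k N) where
  lie_smul c x y := by
    obtain ⟨a, s⟩ := x; obtain ⟨b, t⟩ := y
    refine Prod.ext (show ⁅a, c • b⁆ + s • euler k N (c • b) - (c * t) • euler k N a
        = c • (⁅a, b⁆ + s • euler k N b - t • euler k N a) from ?_)
      (show (0 : k) = c • (0 : k) from (smul_zero c).symm)
    simp only [lie_smul', map_smul, smul_smul, smul_sub, smul_add, mul_comm]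

lemma Sd.lie_mk (a b : L) (s t : k) :
    ⁅Sd.mk k N a s, Sd.mk k N b t⁆
      = Sd.mk k N (⁅a, b⁆ + s • euler k N b - t • euler k N a) 0 := rfl

/-- The inclusion `L → Sd` as a Lie algebra morphism. -/
noncomputable def Sd.inl : FreeLieAlgebra k (Fin N) →ₗ⁅k⁆ Sd k N where
  toFun a := Sd.mk k N a 0
  map_add' a b := by
    refine Prod.ext (show a + b = a + b from rfl) (show (0 : k) = 0 + 0 from (add_zero 0).symm)
  map_smul' c a := by
    refine Prod.ext (show c • a = c • a from rfl) (show (0 : k) = c • 0 from (smul_zero c).symm)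
  map_lie' {a b} := by
    show Sd.mk k N ⁅a, b⁆ 0 = ⁅Sd.mk k N a 0, Sd.mk k N b 0⁆
    rw [Sd.lie_mk]
    exact Prod.ext (show ⁅a, b⁆ = ⁅a, b⁆ + (0 : k) • euler k N b - (0 : k) • euler k N a
      from by simp) rfl

/-- The first projection `Sd → L` as a linear map. -/
noncomputable def Sd.proj : Sd k N →ₗ[k] FreeLieAlgebra k (Fin N) where
  toFun x := x.1
  map_add' _ _ := rfl
  map_smul' _ _ := rfl

lemma Sd.proj_mk (a : L) (s : k) : Sd.proj k N (Sd.mk k N a s) = a := rfl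

end Semidirect

section Main
variable (k : Type*) [Field k] (n m : ℕ)

/-- The evaluation morphism `x_j ↦ x_j` (`j ≤ n+m`), `x_{n+m+1} ↦ -E`. -/
noncomputable def sHom : FreeLieAlgebra k (Fin (n + m + 1)) →ₗ⁅k⁆ Sd k (n + m) :=
  FreeLieAlgebra.lift k fun j : Fin (n + m + 1) =>
    if h : (j : ℕ) < n + m then Sd.mk k (n + m) (FreeLieAlgebra.of k ⟨j, h⟩) 0
    else Sd.mk k (n + m) 0 (-1)

lemma sHom_comp_substBracket (i : Fin m) :
    (sHom k n m).comp (substBracket k n m i) = Sd.inl k (n + m) := by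
  apply FreeLieAlgebra.hom_ext
  intro j
  show sHom k n m (substBracket k n m i (FreeLieAlgebra.of k j))
      = Sd.mk k (n + m) (FreeLieAlgebra.of k j) 0
  rw [substBracket, FreeLieAlgebra.lift_of_apply]
  have h1 : ((j.castSucc : Fin (n + m + 1)) : ℕ) < n + m := by
    simpa using j.isLt
  have hj' : (⟨((j.castSucc : Fin (n + m + 1)) : ℕ), h1⟩ : Fin (n + m)) = j := by
    ext; simp
  by_cases hj : (j : ℕ) = n + (i : ℕ)
  · rw [if_pos hj, LieHom.map_lie]
    rw [sHom, FreeLieAlgebra.lift_of_apply, FreeLieAlgebra.lift_of_apply]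
    rw [dif_pos h1, dif_neg (by simp), hj', Sd.lie_mk]
    congr 1
    simp [euler_of]
  · rw [if_neg hj]
    rw [sHom, FreeLieAlgebra.lift_of_apply, dif_pos h1, hj']

lemma proj_sHom_insertBracketMap (P : FreeLieAlgebra k (Fin (n + m))) :
    Sd.proj k (n + m) (sHom k n m (insertBracketMap k n m P)) = (m : k) • P := by
  have h : insertBracketMap k n m P = ∑ i : Fin m, substBracket k n m i P := by
    rw [insertBracketMap, LinearMap.sum_apply]
    rfl
  have h3 : Sd.proj k (n + m) (sHom k n m (∑ i : Fin m, substBracket k n m i P))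
      = ∑ i : Fin m, Sd.proj k (n + m) (sHom k n m (substBracket k n m i P)) :=
    map_sum ((Sd.proj k (n + m)) ∘ₗ (sHom k n m).toLinearMap) _ Finset.univ
  rw [h, h3]
  have h2 : ∀ i : Fin m,
      Sd.proj k (n + m) (sHom k n m (substBracket k n m i P))
        = P := fun i => by
    rw [show sHom k n m (substBracket k n m i P) = Sd.inl k (n + m) P from
      LieHom.congr_fun (sHom_comp_substBracket k n m i) P]
    rfl
  rw [Finset.sum_congr rfl fun i _ => h2 i, Finset.sum_const, Finset.card_univ,
    Fintype.card_fin, Nat.cast_smul_eq_nsmul]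

end Main

/-- For `n ≥ 0`, `m ≥ 1`, the map
`i_{n,m} : L(x_1,…,x_{n+m}) → L(x_1,…,x_{n+m+1})`,
`P ↦ Σ_{i=1}^m P(x_1,…,[x_{n+i},x_{n+m+1}],…,x_{n+m})`, is injective on the
multilinear part; more precisely it admits a linear retraction `p` there. -/
theorem insertBracketMap_injective
    (k : Type*) [Field k] [CharZero k] (n m : ℕ) (hm : 1 ≤ m) :
    (∃ p : FreeLieAlgebra k (Fin (n + m + 1)) →ₗ[k] FreeLieAlgebra k (Fin (n + m)),
      ∀ P ∈ multilinearLie k (n + m), p (insertBracketMap k n m P) = P) ∧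
    Set.InjOn (insertBracketMap k n m) (multilinearLie k (n + m) : Set _) := by
  have hm0 : ((m : k)) ≠ 0 := Nat.cast_ne_zero.mpr (by omega)
  set p : FreeLieAlgebra k (Fin (n + m + 1)) →ₗ[k] FreeLieAlgebra k (Fin (n + m)) :=
    (m : k)⁻¹ • ((Sd.proj k (n + m)) ∘ₗ (sHom k n m).toLinearMap) with hp_def
  have hp : ∀ P : FreeLieAlgebra k (Fin (n + m)), p (insertBracketMap k n m P) = P := by
    intro P
    rw [hp_def]
    simp only [LinearMap.smul_apply, LinearMap.comp_apply, LieHom.coe_toLinearMap]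
    rw [proj_sHom_insertBracketMap]
    exact inv_smul_smul₀ hm0 P
  exact ⟨⟨p, fun P _ => hp P⟩, fun P _ Q _ h => by rw [← hp P, ← hp Q, h]⟩
end

section
/- Let A be an associative unital algebra over a field of characteristic 0 with a decreasing multiplicative filtration A = A^0 ⊇ A^1 ⊇ ..., complete and separated. Let θ be a filtration-preserving algebra automorphism of A such that (θ − id)(A^n) ⊆ A^{n+1} for all n. Then for every u ∈ A with u ≡ 1 mod A^1, there exists a unique v ∈ A with v ≡ 1 mod A^1 and v·θ(v) = u. -/
lemma aux_identity {k A : Type*} [Field k] [CharZero k] [Ring A] [Algebra k A]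
    (θ : A ≃ₐ[k] A) (u v : A) :
    u - (v + (2:k)⁻¹ • (u - v * θ v)) * θ (v + (2:k)⁻¹ • (u - v * θ v)) =
      -((2:k)⁻¹ • ((u - v * θ v) * (θ v - 1))) - (2:k)⁻¹ • ((v - 1) * θ (u - v * θ v))
        - (2:k)⁻¹ • (θ (u - v * θ v) - (u - v * θ v))
        - (2:k)⁻¹ • ((2:k)⁻¹ • ((u - v * θ v) * θ (u - v * θ v))) := by
  set e := u - v * θ v with he
  have hθ : θ (v + (2:k)⁻¹ • e) = θ v + (2:k)⁻¹ • θ e := by simp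
  rw [hθ]
  simp only [mul_add, add_mul, smul_mul_assoc, mul_smul_comm, mul_sub, sub_mul,
    smul_sub, mul_one, one_mul, smul_smul]
  match_scalars <;> norm_num

/-- In a complete separated filtered algebra over a field of
characteristic 0, given a filtration-preserving automorphism `θ` with
`(θ − id)(Aⁿ) ⊆ Aⁿ⁺¹`, every `u ≡ 1 mod A¹` admits a unique `v ≡ 1 mod A¹`
with `v · θ(v) = u`. -/
theorem filtered_algebra_unique_twisted_sqrt
    (k : Type*) [Field k] [CharZero k]
    (A : Type*) [Ring A] [Algebra k A]
    (F : ℕ → Submodule k A)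
    (hF0 : F 0 = ⊤)
    (hFanti : ∀ i j : ℕ, i ≤ j → F j ≤ F i)
    (hFmul : ∀ i j : ℕ, ∀ a ∈ F i, ∀ b ∈ F j, a * b ∈ F (i + j))
    (hsep : ∀ a : A, (∀ n : ℕ, a ∈ F n) → a = 0)
    (hcomp : ∀ s : ℕ → A, (∀ n : ℕ, s (n + 1) - s n ∈ F n) →
      ∃ L : A, ∀ n : ℕ, L - s n ∈ F n)
    (θ : A ≃ₐ[k] A)
    (hθF : ∀ n : ℕ, ∀ a ∈ F n, θ a ∈ F n)
    (hθ1 : ∀ n : ℕ, ∀ a ∈ F n, θ a - a ∈ F (n + 1))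
    (u : A) (hu : u - 1 ∈ F 1) :
    ∃! v : A, v - 1 ∈ F 1 ∧ v * θ v = u := by
  -- the Newton-type iteration
  set vs : ℕ → A := fun n => Nat.rec (1 : A)
    (fun _ v => v + (2:k)⁻¹ • (u - v * θ v)) n with hvs
  have hstep : ∀ n, vs (n + 1) = vs n + (2:k)⁻¹ • (u - vs n * θ (vs n)) := fun n => rfl
  have hvs0 : vs 0 = 1 := rfl
  -- invariants
  have key : ∀ n, (vs n - 1 ∈ F 1) ∧ (u - vs n * θ (vs n) ∈ F (n + 1)) := by
    intro n
    induction n with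
    | zero =>
      constructor
      · simp [hvs0]
      · simpa [hvs0] using hu
    | succ n ih =>
      obtain ⟨h1, he⟩ := ih
      have hθv1 : θ (vs n) - 1 ∈ F 1 := by
        have := hθF 1 _ h1
        simpa [map_sub] using this
      have hθe : θ (u - vs n * θ (vs n)) ∈ F (n + 1) := hθF _ _ he
      have t1 : (u - vs n * θ (vs n)) * (θ (vs n) - 1) ∈ F (n + 2) := by
        simpa using hFmul (n + 1) 1 _ he _ hθv1
      have t2 : (vs n - 1) * θ (u - vs n * θ (vs n)) ∈ F (n + 2) := by
        have := hFmul 1 (n + 1) _ h1 _ hθe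
        rwa [show 1 + (n + 1) = n + 2 from by omega] at this
      have t3 : θ (u - vs n * θ (vs n)) - (u - vs n * θ (vs n)) ∈ F (n + 2) :=
        hθ1 (n + 1) _ he
      have t4 : (u - vs n * θ (vs n)) * θ (u - vs n * θ (vs n)) ∈ F (n + 2) := by
        have he1 : u - vs n * θ (vs n) ∈ F 1 := hFanti 1 (n + 1) (by omega) he
        have := hFmul 1 (n + 1) _ he1 _ hθe
        rwa [show 1 + (n + 1) = n + 2 from by omega] at this
      have hmem : u - vs (n + 1) * θ (vs (n + 1)) ∈ F (n + 2) := by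
        rw [hstep, aux_identity θ u (vs n)]
        exact Submodule.sub_mem _
          (Submodule.sub_mem _
            (Submodule.sub_mem _ (Submodule.neg_mem _ (Submodule.smul_mem _ _ t1))
              (Submodule.smul_mem _ _ t2))
            (Submodule.smul_mem _ _ t3))
          (Submodule.smul_mem _ _ (Submodule.smul_mem _ _ t4))
      constructor
      · rw [hstep]
        have : vs n + (2:k)⁻¹ • (u - vs n * θ (vs n)) - 1
            = (vs n - 1) + (2:k)⁻¹ • (u - vs n * θ (vs n)) := by abel
        rw [this]
        exact Submodule.add_mem _ h1
          (Submodule.smul_mem _ _ (hFanti 1 (n + 1) (by omega) he))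
      · exact hmem
  -- pass to the limit
  have hcauchy : ∀ n, vs (n + 1) - vs n ∈ F n := by
    intro n
    rw [hstep]
    have : vs n + (2:k)⁻¹ • (u - vs n * θ (vs n)) - vs n
        = (2:k)⁻¹ • (u - vs n * θ (vs n)) := by abel
    rw [this]
    exact Submodule.smul_mem _ _ (hFanti n (n + 1) (by omega) (key n).2)
  obtain ⟨L, hL⟩ := hcomp vs hcauchy
  have hL1 : L - 1 ∈ F 1 := by
    have h : L - 1 = (L - vs 1) + (vs 1 - 1) := by abel
    rw [h]
    exact Submodule.add_mem _ (hL 1) (key 1).1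
  have hLmul : L * θ L = u := by
    have hz : u - L * θ L = 0 := by
      apply hsep
      intro n
      have h1 : u - vs n * θ (vs n) ∈ F n := hFanti n (n + 1) (by omega) (key n).2
      have hd : vs n - L ∈ F n := by
        have := Submodule.neg_mem _ (hL n); simpa using this
      have h2 : (vs n - L) * θ (vs n) ∈ F n := by
        have hθvn : θ (vs n) ∈ F 0 := by rw [hF0]; trivial
        simpa using hFmul n 0 _ hd _ hθvn
      have h3 : L * θ (vs n - L) ∈ F n := by
        have hL0 : L ∈ F 0 := by rw [hF0]; trivial
        have := hFmul 0 n _ hL0 _ (hθF n _ hd)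
        simpa using this
      have heq : u - L * θ L
          = (u - vs n * θ (vs n)) + ((vs n - L) * θ (vs n) + L * θ (vs n - L)) := by
        simp only [map_sub, mul_sub, sub_mul]
        abel
      rw [heq]
      exact Submodule.add_mem _ h1 (Submodule.add_mem _ h2 h3)
    have := sub_eq_zero.mp hz
    exact this.symm
  -- uniqueness
  refine ⟨L, ⟨hL1, hLmul⟩, ?_⟩
  rintro y ⟨hy1, hy2⟩
  have hdn : ∀ n, y - L ∈ F n := by
    intro n
    induction n with
    | zero => rw [hF0]; trivial
    | succ n ih =>
      have hθy1 : θ y - 1 ∈ F 1 := by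
        have := hθF 1 _ hy1
        simpa [map_sub] using this
      have t1 : (y - L) * (θ y - 1) ∈ F (n + 1) := hFmul n 1 _ ih _ hθy1
      have t2 : (L - 1) * θ (y - L) ∈ F (n + 1) := by
        have := hFmul 1 n _ hL1 _ (hθF n _ ih)
        rwa [show 1 + n = n + 1 from by omega] at this
      have t3 : θ (y - L) - (y - L) ∈ F (n + 1) := hθ1 n _ ih
      have t4 : y * θ y - L * θ L ∈ F (n + 1) := by
        rw [hy2, hLmul, sub_self]
        exact Submodule.zero_mem _
      have heq : (y - L) + (y - L)
          = -((y - L) * (θ y - 1)) - ((L - 1) * θ (y - L)) - (θ (y - L) - (y - L))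
            + (y * θ y - L * θ L) := by
        simp only [map_sub, mul_sub, sub_mul, mul_one, one_mul]
        abel
      have hdd : (y - L) + (y - L) ∈ F (n + 1) := by
        rw [heq]
        exact Submodule.add_mem _
          (Submodule.sub_mem _
            (Submodule.sub_mem _ (Submodule.neg_mem _ t1) t2) t3) t4
      have hsmul : y - L = (2:k)⁻¹ • ((y - L) + (y - L)) := by
        rw [← two_smul k (y - L), smul_smul,
          inv_mul_cancel₀ (two_ne_zero : (2:k) ≠ 0), one_smul]
      rw [hsmul]
      exact Submodule.smul_mem _ _ hdd
  have : y - L = 0 := hsep _ hdn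
  exact sub_eq_zero.mp this
end

section
/- Let A be an associative unital algebra over a field k of characteristic 0 with a decreasing multiplicative filtration A = A^0 ⊇ A^1 ⊇ ..., complete and separated. For every u ∈ A with u ≡ 1 mod A^1 there exists a unique family (u^t)_{t ∈ k} of elements of A such that: u^1 = u, u^{t+s} = u^t·u^s for all t,s ∈ k, and for every n the map t ↦ (class of u^t in A/A^n) is polynomial in t. Moreover each u^t ≡ 1 mod A^1. -/
open Finset Polynomial

section Aux

variable {k : Type*} [Field k] [CharZero k]

/-- A module-valued polynomial function vanishing at `(j:k)+1` for all naturals `j` vanishes. -/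
lemma fa_poly_vanish {M : Type*} [AddCommGroup M] [Module k M]
    (m : ℕ) (c : ℕ → M) (h : ∀ j : ℕ, ∑ i ∈ range m, ((j : k) + 1) ^ i • c i = 0) :
    ∀ t : k, ∑ i ∈ range m, t ^ i • c i = 0 := by
  have hc : ∀ i ∈ range m, c i = 0 := by
    intro i hi
    rw [← Module.forall_dual_apply_eq_zero_iff k]
    intro φ
    set p : k[X] := ∑ l ∈ range m, Polynomial.C (φ (c l)) * X ^ l with hp
    have hroot : p = 0 := by
      apply Polynomial.eq_zero_of_infinite_isRoot
      have hinf : (Set.range (fun j : ℕ => (j : k) + 1)).Infinite := by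
        apply Set.infinite_range_of_injective
        intro a b hab
        exact Nat.cast_injective (by exact_mod_cast add_right_cancel hab)
      apply hinf.mono
      rintro x ⟨j, rfl⟩
      simp only [Set.mem_setOf_eq, IsRoot.def, hp, Polynomial.eval_finset_sum,
        Polynomial.eval_mul, Polynomial.eval_C, Polynomial.eval_pow, Polynomial.eval_X]
      have h2 : ∑ l ∈ range m, φ (c l) * ((j:k)+1) ^ l
          = φ (∑ l ∈ range m, ((j:k)+1) ^ l • c l) := by
        rw [map_sum]
        refine sum_congr rfl fun l _ => ?_
        rw [map_smul, smul_eq_mul, mul_comm]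
      rw [h2, h j, map_zero]
    have hco : p.coeff i = φ (c i) := by
      rw [hp, Polynomial.finset_sum_coeff, Finset.sum_eq_single i]
      · simp
      · intro b _ hb
        simp [Polynomial.coeff_C_mul, Polynomial.coeff_X_pow, Ne.symm hb]
      · intro hb; exact absurd hi hb
    rw [← hco, hroot, Polynomial.coeff_zero]
  intro t
  exact Finset.sum_eq_zero fun i hi => by rw [hc i hi, smul_zero]

/-- `Ring.choose t i` is a polynomial function of `t`. -/
lemma fa_choose_poly (t : k) (i : ℕ) :
    Ring.choose t i =
      ∑ j ∈ range (i + 1),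
        ((i.factorial : k)⁻¹ * ((descPochhammer ℤ i).coeff j : k)) * t ^ j := by
  have h := Ring.descPochhammer_eq_factorial_smul_choose t i
  have hs : (descPochhammer ℤ i).smeval t
      = ∑ j ∈ range (i + 1), ((descPochhammer ℤ i).coeff j : k) * t ^ j := by
    rw [Polynomial.smeval_eq_sum]
    rw [Polynomial.sum_over_range' (h := by simp [Polynomial.smul_pow]) (n := i + 1)]
    case hn => rw [descPochhammer_natDegree]; omega
    refine sum_congr rfl fun j _ => ?_
    rw [Polynomial.smul_pow, zsmul_eq_mul]
  have hfac : (i.factorial : k) ≠ 0 := Nat.cast_ne_zero.mpr i.factorial_ne_zero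
  rw [hs, nsmul_eq_mul] at h
  rw [Finset.sum_congr rfl (fun j _ => by ring :
    ∀ j ∈ range (i+1), ((i.factorial : k)⁻¹ * ((descPochhammer ℤ i).coeff j : k)) * t ^ j
      = (i.factorial : k)⁻¹ * (((descPochhammer ℤ i).coeff j : k) * t ^ j)), ← Finset.mul_sum, h,
    inv_mul_cancel_left₀ hfac]

/-- Padding a polynomial expression with zero coefficients. -/
lemma fa_pad {M : Type*} [AddCommGroup M] [Module k M]
    (m M' : ℕ) (hm : m ≤ M') (c : ℕ → M) (t : k) :
    ∑ j ∈ range M', t ^ j • (if j < m then c j else 0) = ∑ j ∈ range m, t ^ j • c j := by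
  rw [← Finset.sum_subset (Finset.range_subset_range.mpr hm)]
  · refine sum_congr rfl fun j hj => ?_
    rw [if_pos (mem_range.mp hj)]
  · intro j _ hj
    rw [if_neg (by simpa using hj), smul_zero]

end Aux

section Filtered

variable {k : Type*} [Field k] [CharZero k]
variable {A : Type*} [Ring A] [Algebra k A]
variable {F : ℕ → Submodule k A}

/-- Any multiplicative polynomial family with `P 1 ≡ 1 mod F 1` is ≡ 1 mod `F 1`. -/
lemma fa_mod_one
    (hF0 : F 0 = ⊤)
    (hFmul : ∀ i j : ℕ, ∀ a ∈ F i, ∀ b ∈ F j, a * b ∈ F (i + j))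
    (P : k → A)
    (hmul : ∀ t s : k, P (t + s) = P t * P s)
    (h1 : P 1 - 1 ∈ F 1)
    (hpoly : ∃ (m : ℕ) (c : ℕ → A), ∀ t : k,
      P t - ∑ i ∈ range m, t ^ i • c i ∈ F 1) :
    ∀ t : k, P t - 1 ∈ F 1 := by
  have hbl : ∀ (n : ℕ) (a b : A), b ∈ F n → a * b ∈ F n := by
    intro n a b hb
    simpa using hFmul 0 n a (by rw [hF0]; trivial) b hb
  -- P at positive natural points is ≡ 1 mod F 1
  have hnat : ∀ j : ℕ, P ((j : k) + 1) - 1 ∈ F 1 := by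
    intro j
    induction j with
    | zero => simpa using h1
    | succ j ih =>
        have hcast : (((j+1 : ℕ) : k) + 1) = ((j : k) + 1) + 1 := by push_cast; ring
        rw [hcast, hmul]
        have hQ : P ((j:k)+1) * P 1 - 1
            = P ((j:k)+1) * (P 1 - 1) + (P ((j:k)+1) - 1) := by noncomm_ring
        rw [hQ]
        exact Submodule.add_mem _ (hbl 1 _ _ h1) ih
  obtain ⟨m, c, hc⟩ := hpoly
  -- pad to length m+1 so the constant term exists
  set c' : ℕ → A := fun j => if j < m then c j else 0 with hc'
  have hc1 : ∀ t : k, P t - ∑ i ∈ range (m+1), t ^ i • c' i ∈ F 1 := by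
    intro t
    rw [hc', fa_pad m (m+1) (Nat.le_succ m) c t]
    exact hc t
  -- in the quotient
  set π := (F 1).mkQ with hπ
  have hrep : ∀ t : k, π (P t) = ∑ i ∈ range (m+1), t ^ i • π (c' i) := by
    intro t
    have := (Submodule.Quotient.mk_eq_zero (F 1)).mpr (hc1 t)
    have h0 : π (P t - ∑ i ∈ range (m+1), t ^ i • c' i) = 0 := this
    rw [map_sub, sub_eq_zero] at h0
    rw [h0, map_sum]
    exact sum_congr rfl fun i _ => by rw [map_smul]
  set e : ℕ → A ⧸ F 1 := fun j => if j = 0 then π (c' 0) - π 1 else π (c' j) with he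
  have hesum : ∀ t : k, ∑ i ∈ range (m+1), t ^ i • e i = π (P t) - π 1 := by
    intro t
    rw [hrep t]
    have : ∑ i ∈ range (m+1), t ^ i • e i
        = ∑ i ∈ range (m+1), (t ^ i • π (c' i) - if i = 0 then t ^ i • π 1 else 0) := by
      refine sum_congr rfl fun i _ => ?_
      by_cases hi : i = 0
      · subst hi; simp [he, smul_sub]
      · simp [he, hi]
    rw [this, Finset.sum_sub_distrib, Finset.sum_ite_eq' (range (m+1)) 0 (fun i => t ^ i • π 1)]
    simp
  have hzero : ∀ j : ℕ, ∑ i ∈ range (m+1), ((j:k)+1) ^ i • e i = 0 := by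
    intro j
    rw [hesum, ← map_sub]
    exact (Submodule.Quotient.mk_eq_zero (F 1)).mpr (hnat j)
  intro t
  have := fa_poly_vanish (m+1) e hzero t
  rw [hesum t, sub_eq_zero] at this
  have : π (P t - 1) = 0 := by rw [map_sub]; rw [this]; simp
  exact (Submodule.Quotient.mk_eq_zero (F 1)).mp this

end Filtered

section Filtered2

variable {k : Type*} [Field k] [CharZero k]
variable {A : Type*} [Ring A] [Algebra k A]
variable {F : ℕ → Submodule k A}

lemma fa_unique
    (hF0 : F 0 = ⊤)
    (hFmul : ∀ i j : ℕ, ∀ a ∈ F i, ∀ b ∈ F j, a * b ∈ F (i + j))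
    (hsep : ∀ a : A, (∀ n : ℕ, a ∈ F n) → a = 0)
    (P Q : k → A)
    (hPQ1 : P 1 = Q 1)
    (hPmul : ∀ t s : k, P (t + s) = P t * P s)
    (hQmul : ∀ t s : k, Q (t + s) = Q t * Q s)
    (hPpoly : ∀ n : ℕ, ∃ (m : ℕ) (c : ℕ → A), ∀ t : k,
      P t - ∑ i ∈ range m, t ^ i • c i ∈ F n)
    (hQpoly : ∀ n : ℕ, ∃ (m : ℕ) (c : ℕ → A), ∀ t : k,
      Q t - ∑ i ∈ range m, t ^ i • c i ∈ F n)
    (hP1 : ∀ t : k, P t - 1 ∈ F 1)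
    (hQ1 : ∀ t : k, Q t - 1 ∈ F 1) :
    P = Q := by
  have key : ∀ n : ℕ, ∀ t : k, P t - Q t ∈ F n := by
    intro n
    induction n with
    | zero => intro t; rw [hF0]; trivial
    | succ n ih =>
      obtain ⟨mP, cP, hcP⟩ := hPpoly (n+1)
      obtain ⟨mQ, cQ, hcQ⟩ := hQpoly (n+1)
      set M := max mP mQ with hM
      set cP' : ℕ → A := fun j => if j < mP then cP j else 0 with hcP'
      set cQ' : ℕ → A := fun j => if j < mQ then cQ j else 0 with hcQ'
      set π := (F (n+1)).mkQ with hπ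
      have hrepP : ∀ t : k, π (P t) = ∑ i ∈ range M, t ^ i • π (cP' i) := by
        intro t
        have h0 : π (P t - ∑ i ∈ range M, t ^ i • cP' i) = 0 := by
          apply (Submodule.Quotient.mk_eq_zero (F (n+1))).mpr
          rw [hcP', fa_pad mP M (le_max_left _ _) cP t]
          exact hcP t
        rw [map_sub, sub_eq_zero] at h0
        rw [h0, map_sum]
        exact sum_congr rfl fun i _ => by rw [map_smul]
      have hrepQ : ∀ t : k, π (Q t) = ∑ i ∈ range M, t ^ i • π (cQ' i) := by
        intro t
        have h0 : π (Q t - ∑ i ∈ range M, t ^ i • cQ' i) = 0 := by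
          apply (Submodule.Quotient.mk_eq_zero (F (n+1))).mpr
          rw [hcQ', fa_pad mQ M (le_max_right _ _) cQ t]
          exact hcQ t
        rw [map_sub, sub_eq_zero] at h0
        rw [h0, map_sum]
        exact sum_congr rfl fun i _ => by rw [map_smul]
      set e : ℕ → A ⧸ F (n+1) := fun j => π (cP' j) - π (cQ' j) with he
      have hesum : ∀ t : k, ∑ i ∈ range M, t ^ i • e i = π (P t - Q t) := by
        intro t
        rw [map_sub, hrepP, hrepQ, ← Finset.sum_sub_distrib]
        exact sum_congr rfl fun i _ => by rw [he, smul_sub]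
      have hadd : ∀ t s : k,
          π (P (t+s) - Q (t+s)) = π (P t - Q t) + π (P s - Q s) := by
        intro t s
        have hident : P (t+s) - Q (t+s) - ((P t - Q t) + (P s - Q s))
            = (P t - 1) * (P s - Q s) + (P t - Q t) * (Q s - 1) := by
          rw [hPmul, hQmul]; noncomm_ring
        have hmem : P (t+s) - Q (t+s) - ((P t - Q t) + (P s - Q s)) ∈ F (n+1) := by
          rw [hident]
          refine Submodule.add_mem _ ?_ ?_
          · have := hFmul 1 n (P t - 1) (hP1 t) (P s - Q s) (ih s)
            simpa [Nat.add_comm] using this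
          · exact hFmul n 1 (P t - Q t) (ih t) (Q s - 1) (hQ1 s)
        have h0 : π (P (t+s) - Q (t+s) - ((P t - Q t) + (P s - Q s))) = 0 :=
          (Submodule.Quotient.mk_eq_zero _).mpr hmem
        rw [map_sub, sub_eq_zero] at h0
        rw [h0, map_add]
      have hnat : ∀ j : ℕ, π (P ((j:k)+1) - Q ((j:k)+1)) = 0 := by
        intro j
        induction j with
        | zero =>
            simpa [hPQ1] using congrArg π (by rw [hPQ1] : P ((0:ℕ):k) + 0 = Q 1 + 0)
        | succ j ihj =>
            have hcast : (((j+1 : ℕ) : k) + 1) = ((j : k) + 1) + 1 := by push_cast; ring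
            rw [hcast, hadd, ihj, zero_add]
            have : P (1:k) - Q (1:k) = 0 := by rw [hPQ1, sub_self]
            rw [this, map_zero]
      have hzero : ∀ j : ℕ, ∑ i ∈ range M, ((j:k)+1) ^ i • e i = 0 := by
        intro j
        rw [hesum]
        exact hnat j
      intro t
      have := fa_poly_vanish M e hzero t
      rw [hesum t] at this
      exact (Submodule.Quotient.mk_eq_zero _).mp this
  funext t
  exact sub_eq_zero.mp (hsep _ (fun n => key n t))

end Filtered2

/-- In a complete separated filtered algebra over a field `k` of
characteristic 0, every `u ≡ 1 mod A¹` has a unique family of formal powers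
`(u^t)_{t ∈ k}`: a one-parameter multiplicative family `P` with `P 1 = u` whose
reduction modulo each `Aⁿ` is polynomial in `t`.  Moreover every member of such a
family is congruent to `1` modulo `A¹`. -/
theorem filtered_algebra_unique_formal_powers
    (k : Type*) [Field k] [CharZero k]
    (A : Type*) [Ring A] [Algebra k A]
    (F : ℕ → Submodule k A)
    (hF0 : F 0 = ⊤)
    (hFanti : ∀ i j : ℕ, i ≤ j → F j ≤ F i)
    (hFmul : ∀ i j : ℕ, ∀ a ∈ F i, ∀ b ∈ F j, a * b ∈ F (i + j))
    (hsep : ∀ a : A, (∀ n : ℕ, a ∈ F n) → a = 0)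
    (hcomp : ∀ s : ℕ → A, (∀ n : ℕ, s (n + 1) - s n ∈ F n) →
      ∃ L : A, ∀ n : ℕ, L - s n ∈ F n)
    (u : A) (hu : u - 1 ∈ F 1) :
    (∃! P : k → A,
      P 1 = u ∧
      (∀ t s : k, P (t + s) = P t * P s) ∧
      (∀ n : ℕ, ∃ (m : ℕ) (c : ℕ → A), ∀ t : k,
        P t - ∑ i ∈ Finset.range m, t ^ i • c i ∈ F n)) ∧
    (∀ P : k → A,
      (P 1 = u ∧
       (∀ t s : k, P (t + s) = P t * P s) ∧
       (∀ n : ℕ, ∃ (m : ℕ) (c : ℕ → A), ∀ t : k,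
         P t - ∑ i ∈ Finset.range m, t ^ i • c i ∈ F n)) →
      ∀ t : k, P t - 1 ∈ F 1) := by
  classical
  -- the "members ≡ 1 mod F 1" statement, proved once and for all
  have part2 : ∀ P : k → A,
      (P 1 = u ∧
       (∀ t s : k, P (t + s) = P t * P s) ∧
       (∀ n : ℕ, ∃ (m : ℕ) (c : ℕ → A), ∀ t : k,
         P t - ∑ i ∈ Finset.range m, t ^ i • c i ∈ F n)) →
      ∀ t : k, P t - 1 ∈ F 1 := by
    rintro P ⟨hP1, hPmul, hPpoly⟩
    exact fa_mod_one hF0 hFmul P hPmul (hP1 ▸ hu) (hPpoly 1)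
  -- the construction
  set x : A := u - 1 with hx
  have hxpow : ∀ i : ℕ, x ^ i ∈ F i := by
    intro i
    induction i with
    | zero => rw [hF0]; trivial
    | succ i ih =>
        rw [pow_succ]
        exact hFmul i 1 (x ^ i) ih x hu
  set S : ℕ → k → A := fun n t => ∑ i ∈ range n, Ring.choose t i • x ^ i with hS
  have hPex : ∀ t : k, ∃ L : A, ∀ n : ℕ, L - S n t ∈ F n := by
    intro t
    apply hcomp
    intro n
    have : S (n+1) t - S n t = Ring.choose t n • x ^ n := by
      rw [hS]; simp [Finset.sum_range_succ]
    rw [this]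
    exact Submodule.smul_mem _ _ (hxpow n)
  set P : k → A := fun t => (hPex t).choose with hPdef
  have hP : ∀ (t : k) (n : ℕ), P t - S n t ∈ F n := fun t => (hPex t).choose_spec
  -- P 1 = u
  have hS1 : ∀ n : ℕ, 2 ≤ n → S n 1 = u := by
    intro n hn
    rw [hS]
    simp only
    rw [← Finset.sum_subset (Finset.range_subset_range.mpr hn)]
    · rw [Finset.sum_range_succ, Finset.sum_range_one]
      rw [show (1:k) = ((1:ℕ):k) by simp, Ring.choose_natCast, Ring.choose_natCast]
      simp [hx]
    · intro i _ hi
      rw [show (1:k) = ((1:ℕ):k) by simp, Ring.choose_natCast]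
      rw [Nat.choose_eq_zero_of_lt (by simpa using hi)]
      simp
  have hP1 : P 1 = u := by
    rw [← sub_eq_zero]
    apply hsep
    intro n
    have h2 : P 1 - u ∈ F (max 2 n) := by
      have := hP 1 (max 2 n)
      rwa [hS1 (max 2 n) (le_max_left _ _)] at this
    exact hFanti n (max 2 n) (le_max_right _ _) h2
  -- multiplicativity
  have hbig : ∀ (t s : k) (n : ℕ), S n t * S n s - S n (t + s) ∈ F n := by
    intro t s n
    have hprod : S n t * S n s
        = ∑ p ∈ range n ×ˢ range n,
            (Ring.choose t p.1 * Ring.choose s p.2) • x ^ (p.1 + p.2) := by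
      rw [hS]
      simp only
      rw [Finset.sum_mul_sum, ← Finset.sum_product']
      refine sum_congr rfl fun p _ => ?_
      rw [smul_mul_assoc, mul_smul_comm, smul_smul, pow_add]
    have hbiun : (range n).biUnion Finset.HasAntidiagonal.antidiagonal
        = (range n ×ˢ range n).filter (fun p : ℕ × ℕ => p.1 + p.2 < n) := by
      ext p
      simp only [Finset.mem_biUnion, Finset.mem_range, Finset.HasAntidiagonal.mem_antidiagonal,
        Finset.mem_filter, Finset.mem_product]
      exact ⟨fun ⟨i, hi, he⟩ => by omega, fun h => ⟨p.1 + p.2, by omega, rfl⟩⟩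
    have hdisj : (↑(range n) : Set ℕ).PairwiseDisjoint Finset.HasAntidiagonal.antidiagonal := by
      intro a _ b _ hab
      simp only [Function.onFun, Finset.disjoint_left]
      intro p hp hq
      rw [Finset.HasAntidiagonal.mem_antidiagonal] at hp hq
      exact hab (hp ▸ hq ▸ rfl)
    have hvander : S n (t + s)
        = ∑ p ∈ (range n ×ˢ range n).filter (fun p : ℕ × ℕ => p.1 + p.2 < n),
            (Ring.choose t p.1 * Ring.choose s p.2) • x ^ (p.1 + p.2) := by
      rw [hS]
      simp only
      rw [← hbiun, Finset.sum_biUnion hdisj]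
      refine sum_congr rfl fun i _ => ?_
      rw [Ring.add_choose_eq i (Commute.all t s), Finset.sum_smul]
      refine sum_congr rfl fun p hp => ?_
      rw [Finset.HasAntidiagonal.mem_antidiagonal] at hp
      rw [hp]
    have hsplit := Finset.sum_filter_add_sum_filter_not (range n ×ˢ range n)
      (fun p : ℕ × ℕ => p.1 + p.2 < n)
      (fun p : ℕ × ℕ => (Ring.choose t p.1 * Ring.choose s p.2) • x ^ (p.1 + p.2))
    have hdiff : S n t * S n s - S n (t + s)
        = ∑ p ∈ (range n ×ˢ range n).filter (fun p : ℕ × ℕ => ¬ p.1 + p.2 < n),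
            (Ring.choose t p.1 * Ring.choose s p.2) • x ^ (p.1 + p.2) := by
      rw [hprod, hvander, ← hsplit]
      abel
    rw [hdiff]
    apply Submodule.sum_mem
    intro p hp
    rw [Finset.mem_filter] at hp
    exact Submodule.smul_mem _ _ (hFanti n (p.1 + p.2) (by omega) (hxpow _))
  have hPmul : ∀ t s : k, P (t + s) = P t * P s := by
    intro t s
    rw [← sub_eq_zero]
    apply hsep
    intro n
    have e1 : P (t+s) - S n (t+s) ∈ F n := hP (t+s) n
    have e2 : S n t * S n s - S n (t+s) ∈ F n := hbig t s n
    have e3 : (S n t - P t) * S n s ∈ F n := by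
      have hst : S n t - P t ∈ F n := by simpa using Submodule.neg_mem _ (hP t n)
      have := hFmul n 0 (S n t - P t) hst (S n s) (by rw [hF0]; trivial)
      simpa using this
    have e4 : P t * (S n s - P s) ∈ F n := by
      have := hFmul 0 n (P t) (by rw [hF0]; trivial) (S n s - P s)
        (by simpa using Submodule.neg_mem _ (hP s n))
      simpa using this
    have hid : P (t+s) - P t * P s
        = (P (t+s) - S n (t+s)) - (S n t * S n s - S n (t+s))
          + ((S n t - P t) * S n s + P t * (S n s - P s)) := by noncomm_ring
    rw [hid]
    exact Submodule.add_mem _ (Submodule.sub_mem _ e1 e2) (Submodule.add_mem _ e3 e4)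
  -- polynomiality
  have hPpoly : ∀ n : ℕ, ∃ (m : ℕ) (c : ℕ → A), ∀ t : k,
      P t - ∑ i ∈ Finset.range m, t ^ i • c i ∈ F n := by
    intro n
    refine ⟨n, fun j => ∑ i ∈ range n,
      ((i.factorial : k)⁻¹ * ((descPochhammer ℤ i).coeff j : k)) • x ^ i, fun t => ?_⟩
    have hrw : ∑ j ∈ range n, t ^ j • (∑ i ∈ range n,
        ((i.factorial : k)⁻¹ * ((descPochhammer ℤ i).coeff j : k)) • x ^ i) = S n t := by
      rw [hS]
      simp only
      calc ∑ j ∈ range n, t ^ j • (∑ i ∈ range n,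
              ((i.factorial : k)⁻¹ * ((descPochhammer ℤ i).coeff j : k)) • x ^ i)
          = ∑ j ∈ range n, ∑ i ∈ range n,
              (((i.factorial : k)⁻¹ * ((descPochhammer ℤ i).coeff j : k)) * t ^ j) • x ^ i := by
            refine sum_congr rfl fun j _ => ?_
            rw [Finset.smul_sum]
            refine sum_congr rfl fun i _ => ?_
            rw [smul_smul, mul_comm]
        _ = ∑ i ∈ range n, ∑ j ∈ range n,
              (((i.factorial : k)⁻¹ * ((descPochhammer ℤ i).coeff j : k)) * t ^ j) • x ^ i :=
            Finset.sum_comm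
        _ = ∑ i ∈ range n, Ring.choose t i • x ^ i := by
            refine sum_congr rfl fun i hi => ?_
            rw [← Finset.sum_smul]
            congr 1
            rw [fa_choose_poly t i]
            rw [← Finset.sum_subset (Finset.range_subset_range.mpr (mem_range.mp hi))]
            intro j _ hj
            have hlt : i < j := by simpa using hj
            rw [Polynomial.coeff_eq_zero_of_natDegree_lt (by rwa [descPochhammer_natDegree])]
            simp
    rw [hrw]
    exact hP t n
  refine ⟨⟨P, ⟨hP1, hPmul, hPpoly⟩, ?_⟩, part2⟩
  intro Q hQ
  exact fa_unique hF0 hFmul hsep Q P (by rw [hQ.1, hP1]) hQ.2.1 hPmul hQ.2.2 hPpoly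
    (part2 Q hQ) (part2 P ⟨hP1, hPmul, hPpoly⟩)
end

section
/- Let A be an associative unital algebra over a field of characteristic 0 with a decreasing multiplicative filtration, complete and separated, and let σ be a filtration-preserving involutive algebra automorphism of A (σ² = id). Let g ∈ A with g ≡ 1 mod A^1, and let (σ(g)·g)^{-1/2} denote the unique square root of (σ(g)·g)^{-1} congruent to 1 mod A^1. Then h := g·(σ(g)·g)^{-1/2} satisfies h·σ(h) = 1 and σ(h)·h = 1. -/
/-- In a complete separated filtered algebra over a field of
characteristic 0 with a filtration-preserving involution `σ`: if `g ≡ 1 mod A¹` and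
`s` is the (unique) square root of `(σ(g)·g)⁻¹` congruent to `1 mod A¹`, then
`h := g·s` satisfies `h·σ(h) = 1` and `σ(h)·h = 1`. -/
theorem filtered_algebra_unitarization
    (k : Type*) [Field k] [CharZero k]
    (A : Type*) [Ring A] [Algebra k A]
    (F : ℕ → Submodule k A)
    (hF0 : F 0 = ⊤)
    (hFanti : ∀ i j : ℕ, i ≤ j → F j ≤ F i)
    (hFmul : ∀ i j : ℕ, ∀ a ∈ F i, ∀ b ∈ F j, a * b ∈ F (i + j))
    (hsep : ∀ a : A, (∀ n : ℕ, a ∈ F n) → a = 0)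
    (hcomp : ∀ s : ℕ → A, (∀ n : ℕ, s (n + 1) - s n ∈ F n) →
      ∃ L : A, ∀ n : ℕ, L - s n ∈ F n)
    (σ : A ≃ₐ[k] A)
    (hσinv : ∀ a : A, σ (σ a) = a)
    (hσF : ∀ n : ℕ, ∀ a ∈ F n, σ a ∈ F n)
    (g : A) (hg : g - 1 ∈ F 1)
    (s : A) (hs1 : s - 1 ∈ F 1)
    (hs2 : s * s * (σ g * g) = 1)
    (hs2' : (σ g * g) * (s * s) = 1) :
    (g * s) * σ (g * s) = 1 ∧ σ (g * s) * (g * s) = 1 := by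
  have hall : ∀ a : A, a ∈ F 0 := by intro a; rw [hF0]; trivial
  -- powers of an element of F 1 lie in F n
  have hpow : ∀ x : A, x ∈ F 1 → ∀ n : ℕ, x ^ n ∈ F n := by
    intro x hx n
    induction n with
    | zero => exact hall _
    | succ n ih =>
      have := hFmul n 1 _ ih _ hx
      rwa [pow_succ]
  -- every element ≡ 1 mod F 1 is invertible (two-sided)
  have hinv : ∀ a : A, a - 1 ∈ F 1 → ∃ b : A, a * b = 1 ∧ b * a = 1 := by
    intro a ha
    set x : A := 1 - a with hxdef
    have hx : x ∈ F 1 := by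
      have hx' : x = -(a - 1) := by rw [hxdef]; noncomm_ring
      rw [hx']; exact neg_mem ha
    set p : ℕ → A := fun n => ∑ i ∈ Finset.range n, x ^ i with hpdef
    have ha' : a = 1 - x := by rw [hxdef]; noncomm_ring
    have hgeom : ∀ n : ℕ, a * p n = 1 - x ^ n ∧ p n * a = 1 - x ^ n := by
      intro n
      induction n with
      | zero => simp [hpdef]
      | succ n ih =>
        constructor
        · have h1 : a * p (n + 1) = a * p n + a * x ^ n := by
            simp [hpdef, Finset.sum_range_succ, mul_add]
          have hax : a * x ^ n = x ^ n - x ^ (n + 1) := by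
            rw [ha', sub_mul, one_mul, pow_succ']
          rw [h1, ih.1, hax]; noncomm_ring
        · have h1 : p (n + 1) * a = p n * a + x ^ n * a := by
            simp [hpdef, Finset.sum_range_succ, add_mul]
          have hax : x ^ n * a = x ^ n - x ^ (n + 1) := by
            rw [ha', mul_sub, mul_one, pow_succ]
          rw [h1, ih.2, hax]; noncomm_ring
    have hcauchy : ∀ n : ℕ, p (n + 1) - p n ∈ F n := by
      intro n
      have h1 : p (n + 1) - p n = x ^ n := by
        simp [hpdef, Finset.sum_range_succ]
      rw [h1]; exact hpow x hx n
    obtain ⟨L, hL⟩ := hcomp p hcauchy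
    refine ⟨L, ?_, ?_⟩
    · have hmem : ∀ n : ℕ, a * L - 1 ∈ F n := by
        intro n
        have h1 : a * (L - p n) ∈ F n := by
          have h := hFmul 0 n a (hall a) _ (hL n)
          rwa [zero_add] at h
        have h2 : a * L - 1 = a * (L - p n) - x ^ n := by
          rw [mul_sub, (hgeom n).1]; noncomm_ring
        rw [h2]; exact sub_mem h1 (hpow x hx n)
      exact sub_eq_zero.mp (hsep _ hmem)
    · have hmem : ∀ n : ℕ, L * a - 1 ∈ F n := by
        intro n
        have h1 : (L - p n) * a ∈ F n := by
          have h := hFmul n 0 _ (hL n) a (hall a)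
          rwa [add_zero] at h
        have h2 : L * a - 1 = (L - p n) * a - x ^ n := by
          rw [sub_mul, (hgeom n).2]; noncomm_ring
        rw [h2]; exact sub_mem h1 (hpow x hx n)
      exact sub_eq_zero.mp (hsep _ hmem)
  -- uniqueness of square roots congruent to 1 mod F 1
  have huniq : ∀ p q : A, p - 1 ∈ F 1 → q - 1 ∈ F 1 → p * p = q * q → p = q := by
    intro p q hp hq hsq
    have key : ∀ n : ℕ, p - q ∈ F (n + 1) := by
      intro n
      induction n with
      | zero =>
        have h1 : p - q = (p - 1) - (q - 1) := by noncomm_ring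
        rw [h1]; exact sub_mem hp hq
      | succ n ih =>
        set d : A := p - q with hddef
        have h0 : p * d + d * q = 0 := by
          have : p * d + d * q = p * p - q * q := by rw [hddef]; noncomm_ring
          rw [this, hsq]; noncomm_ring
        have h2 : d + d = -((p - 1) * d + d * (q - 1)) := by
          have : (p - 1) * d + d * (q - 1) = (p * d + d * q) - (d + d) := by noncomm_ring
          rw [this, h0]; noncomm_ring
        have hmem : d + d ∈ F (n + 2) := by
          rw [h2]
          refine neg_mem (add_mem ?_ ?_)
          · have h := hFmul 1 (n + 1) _ hp _ ih
            rwa [show 1 + (n + 1) = n + 2 from by ring] at h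
          · have h := hFmul (n + 1) 1 _ ih _ hq
            exact h
        have hd2 : d = (2 : k)⁻¹ • (d + d) := by
          rw [← two_smul k d, smul_smul, inv_mul_cancel₀ (two_ne_zero), one_smul]
        rw [hddef] at hd2 hmem ⊢
        rw [hd2]
        exact Submodule.smul_mem _ _ hmem
    have : ∀ n : ℕ, p - q ∈ F n := by
      intro n
      exact hFanti n (n + 1) (Nat.le_succ n) (key n)
    exact sub_eq_zero.mp (hsep _ this)
  -- inverse of g
  obtain ⟨gi, hggi, hgig⟩ := hinv g hg
  have hσ1 : σ (1 : A) = 1 := map_one σ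
  set t : A := σ s with htdef
  set P : A := g * s * gi with hPdef
  -- t ≡ 1 mod F 1
  have ht1 : t - 1 ∈ F 1 := by
    have h1 : t - 1 = σ (s - 1) := by rw [htdef, map_sub, hσ1]
    rw [h1]; exact hσF 1 _ hs1
  -- t² is a two-sided inverse of v := g * σ g
  have htt_v : (t * t) * (g * σ g) = 1 := by
    have h1 : σ (s * s * (σ g * g)) = (t * t) * (g * σ g) := by
      rw [map_mul, map_mul, map_mul, hσinv, htdef]
    rw [← h1, hs2, hσ1]
  have hv_tt : (g * σ g) * (t * t) = 1 := by
    have h1 : σ ((σ g * g) * (s * s)) = (g * σ g) * (t * t) := by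
      rw [map_mul, map_mul, map_mul, hσinv, htdef]
    rw [← h1, hs2', hσ1]
  -- P ≡ 1 mod F 1
  have hP1 : P - 1 ∈ F 1 := by
    have h1 : P - 1 = g * (s - 1) * gi := by
      rw [hPdef]
      have : g * (s - 1) * gi = g * s * gi - g * gi := by noncomm_ring
      rw [this, hggi]
    rw [h1]
    have h2 := hFmul 0 1 g (hall g) _ hs1
    have h3 := hFmul (0 + 1) 0 _ h2 gi (hall gi)
    simpa using h3
  -- P² = g (s s) gi
  have hPP : P * P = g * (s * s) * gi := by
    rw [hPdef]
    calc g * s * gi * (g * s * gi) = g * s * (gi * g) * s * gi := by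
          simp [mul_assoc]
      _ = g * (s * s) * gi := by rw [hgig]; simp [mul_assoc]
  -- P² is a two-sided inverse of v := g * σ g
  have hσg_eq : σ g = σ g * g * gi := by
    rw [mul_assoc, hggi, mul_one]
  have hPP_v : (P * P) * (g * σ g) = 1 := by
    rw [hPP]
    have e1 : g * (s * s) * gi * (g * σ g) = g * (s * s) * σ g := by
      calc g * (s * s) * gi * (g * σ g) = g * (s * s) * ((gi * g) * σ g) := by
            noncomm_ring
        _ = g * (s * s) * σ g := by rw [hgig, one_mul]
    rw [e1, hσg_eq]
    calc g * (s * s) * (σ g * g * gi) = g * (s * s * (σ g * g)) * gi := by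
          noncomm_ring
      _ = 1 := by rw [hs2, mul_one, hggi]
  have hv_PP : (g * σ g) * (P * P) = 1 := by
    rw [hPP]
    calc g * σ g * (g * (s * s) * gi) = g * ((σ g * g) * (s * s)) * gi := by
          simp [mul_assoc]
      _ = 1 := by rw [hs2', mul_one, hggi]
  -- hence t² = P², so t = P by uniqueness
  have htP2 : t * t = P * P := by
    calc t * t = (t * t) * ((g * σ g) * (P * P)) := by rw [hv_PP, mul_one]
      _ = ((t * t) * (g * σ g)) * (P * P) := by simp [mul_assoc]
      _ = P * P := by rw [htt_v, one_mul]
  have htP : t = P := huniq t P ht1 hP1 htP2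
  -- key commutation: σ s * g = g * s
  have hts : σ s * g = g * s := by
    have h1 : t * g = g * s * (gi * g) := by rw [htP, hPdef]; simp [mul_assoc]
    rw [htdef] at h1
    rw [h1, hgig, mul_one]
  -- apply σ: s * σ g = σ g * σ s
  have hst : s * σ g = σ g * σ s := by
    have h1 : σ (σ s * g) = σ (g * s) := by rw [hts]
    rw [map_mul, map_mul, hσinv] at h1
    exact h1
  constructor
  · calc (g * s) * σ (g * s) = g * (s * σ g) * σ s := by rw [map_mul]; simp [mul_assoc]
      _ = g * (σ g * σ s) * σ s := by rw [hst]
      _ = (g * σ g) * (t * t) := by rw [htdef]; simp [mul_assoc]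
      _ = 1 := hv_tt
  · calc σ (g * s) * (g * s) = σ g * (σ s * g) * s := by rw [map_mul]; simp [mul_assoc]
      _ = σ g * (g * s) * s := by rw [hts]
      _ = (σ g * g) * (s * s) := by simp [mul_assoc]
      _ = 1 := hs2'
end

section
/- Let H be a bialgebra over a commutative ring, with product m, coproduct Δ, unit 1 and counit ε. Let F ∈ (H ⊗ H)^× be an invertible element satisfying the cocycle equation (F ⊗ 1)·(Δ ⊗ id)(F) = (1 ⊗ F)·(id ⊗ Δ)(F) and the counit conditions (ε ⊗ id)(F) = (id ⊗ ε)(F) = 1. Define Δ_F(x) := F·Δ(x)·F^{-1}. Then (H, m, Δ_F, ε, unit) is again a bialgebra: Δ_F is an algebra morphism, coassociative, and ε is a counit for Δ_F. -/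
open scoped TensorProduct
open Coalgebra

/-- The twisted coproduct `Δ_F(x) = F · Δ(x) · F⁻¹` (with `Finv` a two-sided
inverse of `F`). -/
noncomputable def twistedComul (R : Type*) [CommRing R] (H : Type*) [Ring H]
    [Bialgebra R H] (F Finv : H ⊗[R] H) : H →ₗ[R] H ⊗[R] H :=
  (LinearMap.mulRight R Finv).comp ((LinearMap.mulLeft R F).comp (comul (R := R)))

section TwistAux

/-! ### Auxiliary lemmas for the twisting theorem -/

-- conjugation helpers
lemma twist_cancel_aux {A : Type*} [Ring A] {e ei : A} (h : ei * e = 1) (x : A) :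
    ei * (e * x) = x := by rw [← mul_assoc, h, one_mul]

lemma twist_conj_mul2 {A : Type*} [Ring A] {e ei : A} (h : ei * e = 1) (a b : A) :
    (e * a * ei) * (e * b * ei) = e * (a * b) * ei := by
  simp only [mul_assoc, twist_cancel_aux h]

lemma twist_conj_mul3 {A : Type*} [Ring A] {e ei : A} (h : ei * e = 1) (a b c : A) :
    (e * a * ei) * (e * b * ei) * (e * c * ei) = e * (a * (b * c)) * ei := by
  simp only [mul_assoc, twist_cancel_aux h]

variable (R : Type*) [CommRing R] (H : Type*) [Ring H] [Bialgebra R H]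

-- rTensor / lTensor of an algebra hom agree with the tensor product of algebra homs
lemma twist_rTensor_algHom_eq {B : Type*} [Ring B] [Algebra R B] (f : H →ₐ[R] B) :
    LinearMap.rTensor H f.toLinearMap
      = (Algebra.TensorProduct.map f (AlgHom.id R H)).toLinearMap := by
  apply TensorProduct.ext'
  intro a b
  simp

lemma twist_lTensor_algHom_eq {B : Type*} [Ring B] [Algebra R B] (f : H →ₐ[R] B) :
    LinearMap.lTensor H f.toLinearMap
      = (Algebra.TensorProduct.map (AlgHom.id R H) f).toLinearMap := by
  apply TensorProduct.ext'
  intro a b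
  simp

variable (F Finv : H ⊗[R] H)

lemma twistedComul_apply' (x : H) :
    twistedComul R H F Finv x = F * comul x * Finv := rfl

variable {F Finv}

/-- `Δ_F` as an algebra hom. -/
noncomputable def twistedComulAlgHom (hinv1 : F * Finv = 1) (hinv2 : Finv * F = 1) :
    H →ₐ[R] H ⊗[R] H :=
  AlgHom.ofLinearMap (twistedComul R H F Finv)
    (by simp [twistedComul_apply', Bialgebra.comul_one, hinv1])
    (fun x y => by
      simp only [twistedComul_apply', Bialgebra.comul_mul]
      calc F * (comul x * comul y) * Finv
          = (F * comul x) * ((Finv * F) * (comul y * Finv)) := by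
            rw [hinv2]; simp [mul_assoc]
        _ = F * comul x * Finv * (F * comul y * Finv) := by
            simp [mul_assoc]
      )

@[simp] lemma twistedComulAlgHom_toLinearMap (hinv1 : F * Finv = 1) (hinv2 : Finv * F = 1) :
    (twistedComulAlgHom R H hinv1 hinv2).toLinearMap = twistedComul R H F Finv := rfl

-- rTensor of mulLeft/mulRight
lemma twist_rTensor_mulLeft (G : H ⊗[R] H) :
    LinearMap.rTensor H (LinearMap.mulLeft R G)
      = LinearMap.mulLeft R (G ⊗ₜ[R] (1 : H)) := by
  apply TensorProduct.ext'
  intro a b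
  simp [Algebra.TensorProduct.tmul_mul_tmul]

lemma twist_rTensor_mulRight (G : H ⊗[R] H) :
    LinearMap.rTensor H (LinearMap.mulRight R G)
      = LinearMap.mulRight R (G ⊗ₜ[R] (1 : H)) := by
  apply TensorProduct.ext'
  intro a b
  simp [Algebra.TensorProduct.tmul_mul_tmul]

lemma twist_lTensor_mulLeft (G : H ⊗[R] H) :
    LinearMap.lTensor H (LinearMap.mulLeft R G)
      = LinearMap.mulLeft R ((1 : H) ⊗ₜ[R] G) := by
  apply TensorProduct.ext'
  intro a b
  simp [Algebra.TensorProduct.tmul_mul_tmul]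

lemma twist_lTensor_mulRight (G : H ⊗[R] H) :
    LinearMap.lTensor H (LinearMap.mulRight R G)
      = LinearMap.mulRight R ((1 : H) ⊗ₜ[R] G) := by
  apply TensorProduct.ext'
  intro a b
  simp [Algebra.TensorProduct.tmul_mul_tmul]

variable (F Finv)

lemma twist_rTensor_twistedComul (z : H ⊗[R] H) :
    LinearMap.rTensor H (twistedComul R H F Finv) z
      = (F ⊗ₜ[R] (1:H)) * LinearMap.rTensor H (comul (R := R)) z * (Finv ⊗ₜ[R] (1:H)) := by
  have : LinearMap.rTensor H (twistedComul R H F Finv)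
      = (LinearMap.rTensor H (LinearMap.mulRight R Finv)).comp
        ((LinearMap.rTensor H (LinearMap.mulLeft R F)).comp
          (LinearMap.rTensor H (comul (R := R)))) := by
    rw [← LinearMap.rTensor_comp, ← LinearMap.rTensor_comp]; rfl
  rw [this]
  simp [twist_rTensor_mulLeft, twist_rTensor_mulRight, mul_assoc]

lemma twist_lTensor_twistedComul (z : H ⊗[R] H) :
    LinearMap.lTensor H (twistedComul R H F Finv) z
      = ((1:H) ⊗ₜ[R] F) * LinearMap.lTensor H (comul (R := R)) z * ((1:H) ⊗ₜ[R] Finv) := by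
  have : LinearMap.lTensor H (twistedComul R H F Finv)
      = (LinearMap.lTensor H (LinearMap.mulRight R Finv)).comp
        ((LinearMap.lTensor H (LinearMap.mulLeft R F)).comp
          (LinearMap.lTensor H (comul (R := R)))) := by
    rw [← LinearMap.lTensor_comp, ← LinearMap.lTensor_comp]; rfl
  rw [this]
  simp [twist_lTensor_mulLeft, twist_lTensor_mulRight, mul_assoc]

end TwistAux

set_option maxHeartbeats 1600000

/-- Twisting the coproduct of a bialgebra by an invertible counital
cocycle `F` yields again a bialgebra structure: `Δ_F` is an algebra morphism, is
coassociative, and admits `ε` as a counit. -/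
theorem twist_of_bialgebra_is_bialgebra
    (R : Type*) [CommRing R] (H : Type*) [Ring H] [Bialgebra R H]
    (F Finv : H ⊗[R] H)
    (hinv1 : F * Finv = 1) (hinv2 : Finv * F = 1)
    (hcoc : (F ⊗ₜ[R] (1 : H)) * (LinearMap.rTensor H (comul (R := R)) F)
          = (Algebra.TensorProduct.assoc R R R H H H).symm ((1 : H) ⊗ₜ[R] F)
            * (Algebra.TensorProduct.assoc R R R H H H).symm
                (LinearMap.lTensor H (comul (R := R)) F))
    (hcounit1 : (TensorProduct.lid R H) (LinearMap.rTensor H (counit (R := R)) F) = 1)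
    (hcounit2 : (TensorProduct.rid R H) (LinearMap.lTensor H (counit (R := R)) F) = 1) :
    (∀ x y : H, twistedComul R H F Finv (x * y)
        = twistedComul R H F Finv x * twistedComul R H F Finv y) ∧
    (twistedComul R H F Finv 1 = 1) ∧
    (∀ x : H, (TensorProduct.assoc R H H H)
        (LinearMap.rTensor H (twistedComul R H F Finv) (twistedComul R H F Finv x))
      = LinearMap.lTensor H (twistedComul R H F Finv) (twistedComul R H F Finv x)) ∧
    (∀ x : H, (TensorProduct.lid R H)
        (LinearMap.rTensor H (counit (R := R)) (twistedComul R H F Finv x)) = x) ∧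
    (∀ x : H, (TensorProduct.rid R H)
        (LinearMap.lTensor H (counit (R := R)) (twistedComul R H F Finv x)) = x) := by
  classical
  set ΔF : H →ₐ[R] H ⊗[R] H := twistedComulAlgHom R H hinv1 hinv2 with hΔF
  have hΔFlin : twistedComul R H F Finv = ΔF.toLinearMap := rfl
  -- multiplicativity of rTensor/lTensor of Δ_F and of comul
  have hrTΔF_mul : ∀ a b : H ⊗[R] H,
      LinearMap.rTensor H (twistedComul R H F Finv) (a * b)
        = LinearMap.rTensor H (twistedComul R H F Finv) a
          * LinearMap.rTensor H (twistedComul R H F Finv) b := by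
    intro a b
    rw [hΔFlin, twist_rTensor_algHom_eq]
    simp only [AlgHom.toLinearMap_apply]
    exact map_mul _ a b
  have hlTΔF_mul : ∀ a b : H ⊗[R] H,
      LinearMap.lTensor H (twistedComul R H F Finv) (a * b)
        = LinearMap.lTensor H (twistedComul R H F Finv) a
          * LinearMap.lTensor H (twistedComul R H F Finv) b := by
    intro a b
    rw [hΔFlin, twist_lTensor_algHom_eq]
    simp only [AlgHom.toLinearMap_apply]
    exact map_mul _ a b
  have hcomul_lin : (comul (R := R) (A := H)) = (Bialgebra.comulAlgHom R H).toLinearMap := rfl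
  have hrTc_mul : ∀ a b : H ⊗[R] H,
      LinearMap.rTensor H (comul (R := R)) (a * b)
        = LinearMap.rTensor H (comul (R := R)) a * LinearMap.rTensor H (comul (R := R)) b := by
    intro a b
    rw [hcomul_lin, twist_rTensor_algHom_eq]
    simp only [AlgHom.toLinearMap_apply]
    exact map_mul _ a b
  have hlTc_mul : ∀ a b : H ⊗[R] H,
      LinearMap.lTensor H (comul (R := R)) (a * b)
        = LinearMap.lTensor H (comul (R := R)) a * LinearMap.lTensor H (comul (R := R)) b := by
    intro a b
    rw [hcomul_lin, twist_lTensor_algHom_eq]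
    simp only [AlgHom.toLinearMap_apply]
    exact map_mul _ a b
  have hrTc_one : LinearMap.rTensor H (comul (R := R)) (1 : H ⊗[R] H) = 1 := by
    rw [hcomul_lin, twist_rTensor_algHom_eq]
    simp only [AlgHom.toLinearMap_apply]
    exact map_one _
  have hlTc_one : LinearMap.lTensor H (comul (R := R)) (1 : H ⊗[R] H) = 1 := by
    rw [hcomul_lin, twist_lTensor_algHom_eq]
    simp only [AlgHom.toLinearMap_apply]
    exact map_one _
  refine ⟨fun x y => map_mul ΔF x y, map_one ΔF, ?_, ?_, ?_⟩
  · -- coassociativity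
    intro x
    set A := Algebra.TensorProduct.assoc R R R H H H with hA
    have hAapp : ∀ z : (H ⊗[R] H) ⊗[R] H, (TensorProduct.assoc R H H H) z = A z := fun _ => rfl
    set e : (H ⊗[R] H) ⊗[R] H := F ⊗ₜ[R] (1:H) with he
    set ei : (H ⊗[R] H) ⊗[R] H := Finv ⊗ₜ[R] (1:H) with hei
    set e' : H ⊗[R] (H ⊗[R] H) := (1:H) ⊗ₜ[R] F with he'
    set ei' : H ⊗[R] (H ⊗[R] H) := (1:H) ⊗ₜ[R] Finv with hei'
    have heie : ei * e = 1 := by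
      rw [he, hei, Algebra.TensorProduct.tmul_mul_tmul, hinv2, one_mul,
        ← Algebra.TensorProduct.one_def]
    have heei : e * ei = 1 := by
      rw [he, hei, Algebra.TensorProduct.tmul_mul_tmul, hinv1, one_mul,
        ← Algebra.TensorProduct.one_def]
    have heie' : ei' * e' = 1 := by
      rw [he', hei', Algebra.TensorProduct.tmul_mul_tmul, hinv2, one_mul,
        ← Algebra.TensorProduct.one_def]
    set rTcF := LinearMap.rTensor H (comul (R := R)) F
    set rTcFi := LinearMap.rTensor H (comul (R := R)) Finv
    set lTcF := LinearMap.lTensor H (comul (R := R)) F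
    set lTcFi := LinearMap.lTensor H (comul (R := R)) Finv
    set Φ : (H ⊗[R] H) ⊗[R] H := e * rTcF with hΦ
    set Φi : (H ⊗[R] H) ⊗[R] H := rTcFi * ei with hΦi
    set Ψ : H ⊗[R] (H ⊗[R] H) := e' * lTcF with hΨ
    set Ψi : H ⊗[R] (H ⊗[R] H) := lTcFi * ei' with hΨi
    -- LHS before applying the associator
    have hLHS : LinearMap.rTensor H (twistedComul R H F Finv) (twistedComul R H F Finv x)
        = Φ * LinearMap.rTensor H (comul (R := R)) (comul x) * Φi := by
      rw [twistedComul_apply', hrTΔF_mul, hrTΔF_mul,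
        twist_rTensor_twistedComul, twist_rTensor_twistedComul, twist_rTensor_twistedComul,
        twist_conj_mul3 heie]
      simp only [hΦ, hΦi, mul_assoc]; rfl
    -- RHS
    have hRHS : LinearMap.lTensor H (twistedComul R H F Finv) (twistedComul R H F Finv x)
        = Ψ * LinearMap.lTensor H (comul (R := R)) (comul x) * Ψi := by
      rw [twistedComul_apply', hlTΔF_mul, hlTΔF_mul,
        twist_lTensor_twistedComul, twist_lTensor_twistedComul, twist_lTensor_twistedComul,
        twist_conj_mul3 heie']
      simp only [hΨ, hΨi, mul_assoc]; rfl
    -- images under the associator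
    have hAΦ : A Φ = Ψ := by
      rw [hcoc, map_mul, AlgEquiv.apply_symm_apply, AlgEquiv.apply_symm_apply, hΨ]
    have hΦiΦ : Φi * Φ = 1 := by
      rw [hΦ, hΦi, mul_assoc, ← mul_assoc ei, heie, one_mul, ← hrTc_mul, hinv2, hrTc_one]
    have hΨΨi : Ψ * Ψi = 1 := by
      rw [hΨ, hΨi, mul_assoc, ← mul_assoc lTcF, ← hlTc_mul, hinv1, hlTc_one, one_mul, he',
        hei', Algebra.TensorProduct.tmul_mul_tmul, hinv1, one_mul,
        ← Algebra.TensorProduct.one_def]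
    have hAΦi : A Φi = Ψi := by
      have h1 : A Φi * A Φ = 1 := by rw [← map_mul, hΦiΦ, map_one]
      calc A Φi = A Φi * (Ψ * Ψi) := by rw [hΨΨi, mul_one]
        _ = (A Φi * A Φ) * Ψi := by rw [← hAΦ, mul_assoc]
        _ = Ψi := by rw [h1, one_mul]
    have hAc : A (LinearMap.rTensor H (comul (R := R)) (comul x))
        = LinearMap.lTensor H (comul (R := R)) (comul x) := Coalgebra.coassoc_apply x
    rw [hLHS, hRHS, hAapp, map_mul, map_mul, hAΦ, hAΦi, hAc]
  · -- left counit
    intro x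
    have hφlin : ((Algebra.TensorProduct.lid R H).toAlgHom.comp
          (Algebra.TensorProduct.map (Bialgebra.counitAlgHom R H) (AlgHom.id R H))).toLinearMap
        = (TensorProduct.lid R H).toLinearMap ∘ₗ LinearMap.rTensor H (counit (R := R)) := by
      apply TensorProduct.ext'
      intro a b
      simp
    obtain ⟨φ, hφapp⟩ : ∃ φ : H ⊗[R] H →ₐ[R] H, ∀ z : H ⊗[R] H,
        φ z = (TensorProduct.lid R H) (LinearMap.rTensor H (counit (R := R)) z) :=
      ⟨(Algebra.TensorProduct.lid R H).toAlgHom.comp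
          (Algebra.TensorProduct.map (Bialgebra.counitAlgHom R H) (AlgHom.id R H)),
        fun z => by exact LinearMap.congr_fun hφlin z⟩
    have hφF : φ F = 1 := by rw [hφapp]; exact hcounit1
    have hφFi : φ Finv = 1 := by
      have := map_mul φ F Finv
      rw [hinv1, map_one, hφF, one_mul] at this
      exact this.symm
    have hφΔ : φ (comul x) = x := by
      rw [hφapp, Coalgebra.rTensor_counit_comul]
      simp
    rw [← hφapp, twistedComul_apply', map_mul, map_mul, hφF, hφFi, hφΔ, one_mul, mul_one]
  · -- right counit
    intro x
    have hψlin : ((Algebra.TensorProduct.rid R R H).toAlgHom.comp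
          (Algebra.TensorProduct.map (AlgHom.id R H) (Bialgebra.counitAlgHom R H))).toLinearMap
        = (TensorProduct.rid R H).toLinearMap ∘ₗ LinearMap.lTensor H (counit (R := R)) := by
      apply TensorProduct.ext'
      intro a b
      simp
    obtain ⟨ψ, hψapp⟩ : ∃ ψ : H ⊗[R] H →ₐ[R] H, ∀ z : H ⊗[R] H,
        ψ z = (TensorProduct.rid R H) (LinearMap.lTensor H (counit (R := R)) z) :=
      ⟨(Algebra.TensorProduct.rid R R H).toAlgHom.comp
          (Algebra.TensorProduct.map (AlgHom.id R H) (Bialgebra.counitAlgHom R H)),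
        fun z => by exact LinearMap.congr_fun hψlin z⟩
    have hψF : ψ F = 1 := by rw [hψapp]; exact hcounit2
    have hψFi : ψ Finv = 1 := by
      have := map_mul ψ F Finv
      rw [hinv1, map_one, hψF, one_mul] at this
      exact this.symm
    have hψΔ : ψ (comul x) = x := by
      rw [hψapp, Coalgebra.lTensor_counit_comul]
      simp
    rw [← hψapp, twistedComul_apply', map_mul, map_mul, hψF, hψFi, hψΔ, one_mul, mul_one]
end

section
/- Let a be a Lie algebra over a field of characteristic 0 and r ∈ ∧²(a) (antisymmetric element of a⊗a). Define δ(x) = [r, x⊗1 + 1⊗x] and Z := [r^{12}, r^{13}] + [r^{12}, r^{23}] + [r^{13}, r^{23}] ∈ a^{⊗3}. If Z is a-invariant (i.e. [Z, x⊗1⊗1 + 1⊗x⊗1 + 1⊗1⊗x] = 0 for all x ∈ a), then δ satisfies the co-Jacobi identity: (id + c + c²)∘(δ ⊗ id)∘δ = 0, where c is the cyclic permutation of tensor factors of a^{⊗3}. -/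
open scoped TensorProduct

/-- The coboundary cobracket `δ(x) = [r, x⊗1 + 1⊗x] = −⁅x, r⁆`. -/
noncomputable def coboundaryCobracket (k : Type*) [Field k] (a : Type*)
    [LieRing a] [LieAlgebra k a] (r : a ⊗[k] a) : a →ₗ[k] a ⊗[k] a where
  toFun x := -⁅x, r⁆
  map_add' x y := by simp only [add_lie]; abel
  map_smul' c x := by simp only [smul_lie, RingHom.id_apply, smul_neg]

/-- The cyclic permutation `u⊗v⊗w ↦ w⊗u⊗v` of `a⊗a⊗a`. -/
noncomputable def cyclicPerm (k : Type*) [Field k] (a : Type*)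
    [LieRing a] [LieAlgebra k a] : a ⊗[k] (a ⊗[k] a) ≃ₗ[k] a ⊗[k] (a ⊗[k] a) :=
  (TensorProduct.assoc k a a a).symm.trans (TensorProduct.comm k (a ⊗[k] a) a)

/-- `(δ ⊗ id)` applied to an element of `a ⊗ a`, landing in `a ⊗ (a ⊗ a)`. -/
noncomputable def cobracketTensorId (k : Type*) [Field k] (a : Type*)
    [LieRing a] [LieAlgebra k a] (r : a ⊗[k] a) (w : a ⊗[k] a) : a ⊗[k] (a ⊗[k] a) :=
  (TensorProduct.assoc k a a a)
    ((LinearMap.rTensor a (coboundaryCobracket k a r)) w)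

/-- `Z = [r¹²,r¹³] + [r¹²,r²³] + [r¹³,r²³]` written via a presentation
`r = Σᵢ Aᵢ ⊗ Bᵢ`. -/
noncomputable def cybElement (k : Type*) [Field k] (a : Type*)
    [LieRing a] [LieAlgebra k a] (N : ℕ) (A B : Fin N → a) : a ⊗[k] (a ⊗[k] a) :=
  ∑ i, ∑ j,
    (⁅A i, A j⁆ ⊗ₜ[k] (B i ⊗ₜ[k] B j)
      + A i ⊗ₜ[k] (⁅B i, A j⁆ ⊗ₜ[k] B j)
      + A i ⊗ₜ[k] (A j ⊗ₜ[k] ⁅B i, B j⁆))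

section CoJacobiHelpers

open TensorProduct

variable {k : Type*} [Field k] {a : Type*} [LieRing a] [LieAlgebra k a]
  {M : Type*} [AddCommGroup M] [Module k M]

private lemma my_lie_sum {α M' : Type*} [AddCommGroup M'] [LieRingModule a M']
    (s : Finset α) (y : a) (f : α → M') :
    ⁅y, ∑ i ∈ s, f i⁆ = ∑ i ∈ s, ⁅y, f i⁆ :=
  map_sum (AddMonoidHom.mk' (fun m => ⁅y, m⁆) (lie_add y)) f s

private lemma jac3 (x u v : a) : ⁅⁅x, v⁆, u⁆ + ⁅x, ⁅u, v⁆⁆ = ⁅⁅x, u⁆, v⁆ := by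
  rw [leibniz_lie x u v, ← lie_skew u ⁅x, v⁆]
  abel

private lemma skew0 (u v : a) : ⁅u, v⁆ + ⁅v, u⁆ = 0 := by
  rw [← lie_skew u v]; abel

private lemma cancel3 {P Q R : M} (h : P + R = Q) : P + -Q + R = 0 := by
  rw [← h]; abel

private lemma cancel3' {P Q R : M} (h : P + R = Q) : -Q + P + R = 0 := by
  rw [← h]; abel

variable {N : ℕ} {A B : Fin N → a} {r : a ⊗[k] a}

private lemma sum_swap_bilin (hrep : r = ∑ i, A i ⊗ₜ[k] B i)
    (hanti : (TensorProduct.comm k a a) r = -r)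
    (f : a →ₗ[k] a →ₗ[k] M) :
    ∑ i, f (B i) (A i) = -∑ i, f (A i) (B i) := by
  have h1 : TensorProduct.lift f r = ∑ i, f (A i) (B i) := by
    rw [hrep, map_sum]; simp
  have h2 : TensorProduct.lift f ((TensorProduct.comm k a a) r) = ∑ i, f (B i) (A i) := by
    rw [hrep, map_sum, map_sum]; simp
  rw [hanti, map_neg, h1] at h2
  exact h2.symm

private lemma sum_swap_j (hrep : r = ∑ i, A i ⊗ₜ[k] B i)
    (hanti : (TensorProduct.comm k a a) r = -r)
    (F : Fin N → (a →ₗ[k] a →ₗ[k] M)) :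
    ∑ i, ∑ j, (F i) (B j) (A j) = -∑ i, ∑ j, (F i) (A j) (B j) := by
  rw [← Finset.sum_neg_distrib]
  exact Finset.sum_congr rfl fun i _ => sum_swap_bilin hrep hanti (F i)

private lemma sum_swap_i (hrep : r = ∑ i, A i ⊗ₜ[k] B i)
    (hanti : (TensorProduct.comm k a a) r = -r)
    (F : Fin N → (a →ₗ[k] a →ₗ[k] M)) :
    ∑ i, ∑ j, (F j) (B i) (A i) = -∑ i, ∑ j, (F j) (A i) (B i) := by
  rw [Finset.sum_comm]
  rw [show (∑ i, ∑ j, (F j) (A i) (B i)) = ∑ j, ∑ i, (F j) (A i) (B i) from Finset.sum_comm]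
  exact sum_swap_j hrep hanti F

@[simp] private lemma coboundaryCobracket_apply (y : a) :
    coboundaryCobracket k a r y = -⁅y, r⁆ := rfl

@[simp] private lemma cyclicPerm_tmul (u v w : a) :
    cyclicPerm k a (u ⊗ₜ[k] (v ⊗ₜ[k] w)) = w ⊗ₜ[k] (u ⊗ₜ[k] v) := by
  simp [cyclicPerm]

private lemma expandT (x : a) (hrep : r = ∑ i, A i ⊗ₜ[k] B i) :
    cobracketTensorId k a r (coboundaryCobracket k a r x) =
    (∑ i, ∑ j, ⁅⁅x, A i⁆, A j⁆ ⊗ₜ[k] (B j ⊗ₜ[k] B i))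
      + (∑ i, ∑ j, A j ⊗ₜ[k] (⁅⁅x, A i⁆, B j⁆ ⊗ₜ[k] B i))
      + (∑ i, ∑ j, ⁅A i, A j⁆ ⊗ₜ[k] (B j ⊗ₜ[k] ⁅x, B i⁆))
      + (∑ i, ∑ j, A j ⊗ₜ[k] (⁅A i, B j⁆ ⊗ₜ[k] ⁅x, B i⁆)) := by
  conv_lhs => rw [cobracketTensorId, hrep]
  simp only [my_lie_sum, coboundaryCobracket_apply, map_sum, map_neg, map_add,
    TensorProduct.LieModule.lie_tmul_right, LinearMap.rTensor_tmul, neg_neg,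
    TensorProduct.assoc_tmul, TensorProduct.sum_tmul, TensorProduct.neg_tmul,
    TensorProduct.add_tmul, Finset.sum_neg_distrib, Finset.sum_add_distrib]
  abel

private lemma expandZ (x : a) :
    ⁅x, cybElement k a N A B⁆ =
    (∑ i, ∑ j, ⁅x, ⁅A i, A j⁆⁆ ⊗ₜ[k] (B i ⊗ₜ[k] B j))
      + (∑ i, ∑ j, ⁅A i, A j⁆ ⊗ₜ[k] (⁅x, B i⁆ ⊗ₜ[k] B j))
      + (∑ i, ∑ j, ⁅A i, A j⁆ ⊗ₜ[k] (B i ⊗ₜ[k] ⁅x, B j⁆))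
      + (∑ i, ∑ j, ⁅x, A i⁆ ⊗ₜ[k] (⁅B i, A j⁆ ⊗ₜ[k] B j))
      + (∑ i, ∑ j, A i ⊗ₜ[k] (⁅x, ⁅B i, A j⁆⁆ ⊗ₜ[k] B j))
      + (∑ i, ∑ j, A i ⊗ₜ[k] (⁅B i, A j⁆ ⊗ₜ[k] ⁅x, B j⁆))
      + (∑ i, ∑ j, ⁅x, A i⁆ ⊗ₜ[k] (A j ⊗ₜ[k] ⁅B i, B j⁆))
      + (∑ i, ∑ j, A i ⊗ₜ[k] (⁅x, A j⁆ ⊗ₜ[k] ⁅B i, B j⁆))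
      + (∑ i, ∑ j, A i ⊗ₜ[k] (A j ⊗ₜ[k] ⁅x, ⁅B i, B j⁆⁆)) := by
  rw [cybElement]
  simp only [my_lie_sum, lie_add, TensorProduct.LieModule.lie_tmul_right,
    TensorProduct.tmul_add, TensorProduct.add_tmul, Finset.sum_add_distrib]
  abel

end CoJacobiHelpers

open TensorProduct in
/-- If `r ∈ ∧²(a)` and `Z := [r¹²,r¹³]+[r¹²,r²³]+[r¹³,r²³]` is
`a`-invariant, then `δ(x) = [r, x⊗1+1⊗x]` satisfies the co-Jacobi identity
`(id + c + c²) ∘ (δ⊗id) ∘ δ = 0`. -/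
theorem coboundary_cobracket_coJacobi
    (k : Type*) [Field k] [CharZero k]
    (a : Type*) [LieRing a] [LieAlgebra k a]
    (N : ℕ) (A B : Fin N → a)
    (r : a ⊗[k] a) (hrep : r = ∑ i, A i ⊗ₜ[k] B i)
    (hanti : (TensorProduct.comm k a a) r = -r)
    (hZinv : ∀ x : a, ⁅x, cybElement k a N A B⁆ = 0) :
    ∀ x : a,
      cobracketTensorId k a r (coboundaryCobracket k a r x)
        + cyclicPerm k a (cobracketTensorId k a r (coboundaryCobracket k a r x))
        + cyclicPerm k a (cyclicPerm k a
            (cobracketTensorId k a r (coboundaryCobracket k a r x))) = 0 := by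
  intro x
  -- abbreviations for the twelve T-sums and nine Z-sums
  -- T-sums
  have hT := expandT (A := A) (B := B) (r := r) x hrep
  rw [hT]
  have hcT :
      cyclicPerm k a
        ((∑ i, ∑ j, ⁅⁅x, A i⁆, A j⁆ ⊗ₜ[k] (B j ⊗ₜ[k] B i))
          + (∑ i, ∑ j, A j ⊗ₜ[k] (⁅⁅x, A i⁆, B j⁆ ⊗ₜ[k] B i))
          + (∑ i, ∑ j, ⁅A i, A j⁆ ⊗ₜ[k] (B j ⊗ₜ[k] ⁅x, B i⁆))
          + (∑ i, ∑ j, A j ⊗ₜ[k] (⁅A i, B j⁆ ⊗ₜ[k] ⁅x, B i⁆))) =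
      (∑ i, ∑ j, B i ⊗ₜ[k] (⁅⁅x, A i⁆, A j⁆ ⊗ₜ[k] B j))
        + (∑ i, ∑ j, B i ⊗ₜ[k] (A j ⊗ₜ[k] ⁅⁅x, A i⁆, B j⁆))
        + (∑ i, ∑ j, ⁅x, B i⁆ ⊗ₜ[k] (⁅A i, A j⁆ ⊗ₜ[k] B j))
        + (∑ i, ∑ j, ⁅x, B i⁆ ⊗ₜ[k] (A j ⊗ₜ[k] ⁅A i, B j⁆)) := by
    simp only [map_add, map_sum, cyclicPerm_tmul]
  have hccT :
      cyclicPerm k a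
        ((∑ i, ∑ j, B i ⊗ₜ[k] (⁅⁅x, A i⁆, A j⁆ ⊗ₜ[k] B j))
          + (∑ i, ∑ j, B i ⊗ₜ[k] (A j ⊗ₜ[k] ⁅⁅x, A i⁆, B j⁆))
          + (∑ i, ∑ j, ⁅x, B i⁆ ⊗ₜ[k] (⁅A i, A j⁆ ⊗ₜ[k] B j))
          + (∑ i, ∑ j, ⁅x, B i⁆ ⊗ₜ[k] (A j ⊗ₜ[k] ⁅A i, B j⁆))) =
      (∑ i, ∑ j, B j ⊗ₜ[k] (B i ⊗ₜ[k] ⁅⁅x, A i⁆, A j⁆))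
        + (∑ i, ∑ j, ⁅⁅x, A i⁆, B j⁆ ⊗ₜ[k] (B i ⊗ₜ[k] A j))
        + (∑ i, ∑ j, B j ⊗ₜ[k] (⁅x, B i⁆ ⊗ₜ[k] ⁅A i, A j⁆))
        + (∑ i, ∑ j, ⁅A i, B j⁆ ⊗ₜ[k] (⁅x, B i⁆ ⊗ₜ[k] A j)) := by
    simp only [map_add, map_sum, cyclicPerm_tmul]
  rw [hcT, hccT]
  -- the nine z-sums vanish
  have hz :
      (∑ i, ∑ j, ⁅x, ⁅A i, A j⁆⁆ ⊗ₜ[k] (B i ⊗ₜ[k] B j))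
        + (∑ i, ∑ j, ⁅A i, A j⁆ ⊗ₜ[k] (⁅x, B i⁆ ⊗ₜ[k] B j))
        + (∑ i, ∑ j, ⁅A i, A j⁆ ⊗ₜ[k] (B i ⊗ₜ[k] ⁅x, B j⁆))
        + (∑ i, ∑ j, ⁅x, A i⁆ ⊗ₜ[k] (⁅B i, A j⁆ ⊗ₜ[k] B j))
        + (∑ i, ∑ j, A i ⊗ₜ[k] (⁅x, ⁅B i, A j⁆⁆ ⊗ₜ[k] B j))
        + (∑ i, ∑ j, A i ⊗ₜ[k] (⁅B i, A j⁆ ⊗ₜ[k] ⁅x, B j⁆))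
        + (∑ i, ∑ j, ⁅x, A i⁆ ⊗ₜ[k] (A j ⊗ₜ[k] ⁅B i, B j⁆))
        + (∑ i, ∑ j, A i ⊗ₜ[k] (⁅x, A j⁆ ⊗ₜ[k] ⁅B i, B j⁆))
        + (∑ i, ∑ j, A i ⊗ₜ[k] (A j ⊗ₜ[k] ⁅x, ⁅B i, B j⁆⁆)) = 0 := by
    rw [← expandZ x]; exact hZinv x
  -- swap lemmas via antisymmetry of r
  have h10 : (∑ i, ∑ j, ⁅⁅x, A i⁆, B j⁆ ⊗ₜ[k] (B i ⊗ₜ[k] A j)) =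
      -∑ i, ∑ j, ⁅⁅x, A i⁆, A j⁆ ⊗ₜ[k] (B i ⊗ₜ[k] B j) := by
    simpa using sum_swap_j hrep hanti (fun i => LinearMap.mk₂ k
      (fun u v => ⁅⁅x, A i⁆, u⁆ ⊗ₜ[k] (B i ⊗ₜ[k] v))
      (by intros; simp only [add_lie, lie_add, add_tmul, tmul_add, smul_lie, lie_smul, ← smul_tmul', tmul_smul])
      (by intros; simp only [add_lie, lie_add, add_tmul, tmul_add, smul_lie, lie_smul, ← smul_tmul', tmul_smul])
      (by intros; simp only [add_lie, lie_add, add_tmul, tmul_add, smul_lie, lie_smul, ← smul_tmul', tmul_smul]) (by intros; simp only [add_lie, lie_add, add_tmul, tmul_add, smul_lie, lie_smul, ← smul_tmul', tmul_smul]))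
  have h5 : (∑ i, ∑ j, B i ⊗ₜ[k] (⁅⁅x, A i⁆, A j⁆ ⊗ₜ[k] B j)) =
      -∑ i, ∑ j, A i ⊗ₜ[k] (⁅⁅x, B i⁆, A j⁆ ⊗ₜ[k] B j) := by
    simpa using sum_swap_i hrep hanti (fun j => LinearMap.mk₂ k
      (fun u v => u ⊗ₜ[k] (⁅⁅x, v⁆, A j⁆ ⊗ₜ[k] B j))
      (by intros; simp only [add_lie, lie_add, add_tmul, tmul_add, smul_lie, lie_smul, ← smul_tmul', tmul_smul]) (by intros; simp only [add_lie, lie_add, add_tmul, tmul_add, smul_lie, lie_smul, ← smul_tmul', tmul_smul])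
      (by intros; simp only [add_lie, lie_add, add_tmul, tmul_add, smul_lie, lie_smul, ← smul_tmul', tmul_smul])
      (by intros; simp only [add_lie, lie_add, add_tmul, tmul_add, smul_lie, lie_smul, ← smul_tmul', tmul_smul]))
  have h6 : (∑ i, ∑ j, B i ⊗ₜ[k] (A j ⊗ₜ[k] ⁅⁅x, A i⁆, B j⁆)) =
      -∑ i, ∑ j, A i ⊗ₜ[k] (A j ⊗ₜ[k] ⁅⁅x, B i⁆, B j⁆) := by
    simpa using sum_swap_i hrep hanti (fun j => LinearMap.mk₂ k
      (fun u v => u ⊗ₜ[k] (A j ⊗ₜ[k] ⁅⁅x, v⁆, B j⁆))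
      (by intros; simp only [add_lie, lie_add, add_tmul, tmul_add, smul_lie, lie_smul, ← smul_tmul', tmul_smul]) (by intros; simp only [add_lie, lie_add, add_tmul, tmul_add, smul_lie, lie_smul, ← smul_tmul', tmul_smul])
      (by intros; simp only [add_lie, lie_add, add_tmul, tmul_add, smul_lie, lie_smul, ← smul_tmul', tmul_smul])
      (by intros; simp only [add_lie, lie_add, add_tmul, tmul_add, smul_lie, lie_smul, ← smul_tmul', tmul_smul]))
  have h9a : (∑ i, ∑ j, B j ⊗ₜ[k] (B i ⊗ₜ[k] ⁅⁅x, A i⁆, A j⁆)) =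
      -∑ i, ∑ j, B j ⊗ₜ[k] (A i ⊗ₜ[k] ⁅⁅x, B i⁆, A j⁆) := by
    simpa using sum_swap_i hrep hanti (fun j => LinearMap.mk₂ k
      (fun u v => B j ⊗ₜ[k] (u ⊗ₜ[k] ⁅⁅x, v⁆, A j⁆))
      (by intros; simp only [add_lie, lie_add, add_tmul, tmul_add, smul_lie, lie_smul, ← smul_tmul', tmul_smul]) (by intros; simp only [add_lie, lie_add, add_tmul, tmul_add, smul_lie, lie_smul, ← smul_tmul', tmul_smul])
      (by intros; simp only [add_lie, lie_add, add_tmul, tmul_add, smul_lie, lie_smul, ← smul_tmul', tmul_smul])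
      (by intros; simp only [add_lie, lie_add, add_tmul, tmul_add, smul_lie, lie_smul, ← smul_tmul', tmul_smul]))
  have h9b : (∑ i, ∑ j, B j ⊗ₜ[k] (A i ⊗ₜ[k] ⁅⁅x, B i⁆, A j⁆)) =
      -∑ i, ∑ j, A j ⊗ₜ[k] (A i ⊗ₜ[k] ⁅⁅x, B i⁆, B j⁆) := by
    simpa using sum_swap_j hrep hanti (fun i => LinearMap.mk₂ k
      (fun u v => u ⊗ₜ[k] (A i ⊗ₜ[k] ⁅⁅x, B i⁆, v⁆))
      (by intros; simp only [add_lie, lie_add, add_tmul, tmul_add, smul_lie, lie_smul, ← smul_tmul', tmul_smul]) (by intros; simp only [add_lie, lie_add, add_tmul, tmul_add, smul_lie, lie_smul, ← smul_tmul', tmul_smul])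
      (by intros; simp only [add_lie, lie_add, add_tmul, tmul_add, smul_lie, lie_smul, ← smul_tmul', tmul_smul])
      (by intros; simp only [add_lie, lie_add, add_tmul, tmul_add, smul_lie, lie_smul, ← smul_tmul', tmul_smul]))
  have h7 : (∑ i, ∑ j, ⁅x, B i⁆ ⊗ₜ[k] (⁅A i, A j⁆ ⊗ₜ[k] B j)) =
      -∑ i, ∑ j, ⁅x, A i⁆ ⊗ₜ[k] (⁅B i, A j⁆ ⊗ₜ[k] B j) := by
    simpa using sum_swap_i hrep hanti (fun j => LinearMap.mk₂ k
      (fun u v => ⁅x, u⁆ ⊗ₜ[k] (⁅v, A j⁆ ⊗ₜ[k] B j))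
      (by intros; simp only [add_lie, lie_add, add_tmul, tmul_add, smul_lie, lie_smul, ← smul_tmul', tmul_smul])
      (by intros; simp only [add_lie, lie_add, add_tmul, tmul_add, smul_lie, lie_smul, ← smul_tmul', tmul_smul])
      (by intros; simp only [add_lie, lie_add, add_tmul, tmul_add, smul_lie, lie_smul, ← smul_tmul', tmul_smul])
      (by intros; simp only [add_lie, lie_add, add_tmul, tmul_add, smul_lie, lie_smul, ← smul_tmul', tmul_smul]))
  have h8 : (∑ i, ∑ j, ⁅x, B i⁆ ⊗ₜ[k] (A j ⊗ₜ[k] ⁅A i, B j⁆)) =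
      -∑ i, ∑ j, ⁅x, A i⁆ ⊗ₜ[k] (A j ⊗ₜ[k] ⁅B i, B j⁆) := by
    simpa using sum_swap_i hrep hanti (fun j => LinearMap.mk₂ k
      (fun u v => ⁅x, u⁆ ⊗ₜ[k] (A j ⊗ₜ[k] ⁅v, B j⁆))
      (by intros; simp only [add_lie, lie_add, add_tmul, tmul_add, smul_lie, lie_smul, ← smul_tmul', tmul_smul])
      (by intros; simp only [add_lie, lie_add, add_tmul, tmul_add, smul_lie, lie_smul, ← smul_tmul', tmul_smul])
      (by intros; simp only [add_lie, lie_add, add_tmul, tmul_add, smul_lie, lie_smul, ← smul_tmul', tmul_smul])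
      (by intros; simp only [add_lie, lie_add, add_tmul, tmul_add, smul_lie, lie_smul, ← smul_tmul', tmul_smul]))
  have h11a : (∑ i, ∑ j, B j ⊗ₜ[k] (⁅x, B i⁆ ⊗ₜ[k] ⁅A i, A j⁆)) =
      -∑ i, ∑ j, B j ⊗ₜ[k] (⁅x, A i⁆ ⊗ₜ[k] ⁅B i, A j⁆) := by
    simpa using sum_swap_i hrep hanti (fun j => LinearMap.mk₂ k
      (fun u v => B j ⊗ₜ[k] (⁅x, u⁆ ⊗ₜ[k] ⁅v, A j⁆))
      (by intros; simp only [add_lie, lie_add, add_tmul, tmul_add, smul_lie, lie_smul, ← smul_tmul', tmul_smul])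
      (by intros; simp only [add_lie, lie_add, add_tmul, tmul_add, smul_lie, lie_smul, ← smul_tmul', tmul_smul])
      (by intros; simp only [add_lie, lie_add, add_tmul, tmul_add, smul_lie, lie_smul, ← smul_tmul', tmul_smul])
      (by intros; simp only [add_lie, lie_add, add_tmul, tmul_add, smul_lie, lie_smul, ← smul_tmul', tmul_smul]))
  have h11b : (∑ i, ∑ j, B j ⊗ₜ[k] (⁅x, A i⁆ ⊗ₜ[k] ⁅B i, A j⁆)) =
      -∑ i, ∑ j, A j ⊗ₜ[k] (⁅x, A i⁆ ⊗ₜ[k] ⁅B i, B j⁆) := by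
    simpa using sum_swap_j hrep hanti (fun i => LinearMap.mk₂ k
      (fun u v => u ⊗ₜ[k] (⁅x, A i⁆ ⊗ₜ[k] ⁅B i, v⁆))
      (by intros; simp only [add_lie, lie_add, add_tmul, tmul_add, smul_lie, lie_smul, ← smul_tmul', tmul_smul]) (by intros; simp only [add_lie, lie_add, add_tmul, tmul_add, smul_lie, lie_smul, ← smul_tmul', tmul_smul])
      (by intros; simp only [add_lie, lie_add, add_tmul, tmul_add, smul_lie, lie_smul, ← smul_tmul', tmul_smul])
      (by intros; simp only [add_lie, lie_add, add_tmul, tmul_add, smul_lie, lie_smul, ← smul_tmul', tmul_smul]))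
  have h12 : (∑ i, ∑ j, ⁅A i, B j⁆ ⊗ₜ[k] (⁅x, B i⁆ ⊗ₜ[k] A j)) =
      -∑ i, ∑ j, ⁅A i, A j⁆ ⊗ₜ[k] (⁅x, B i⁆ ⊗ₜ[k] B j) := by
    simpa using sum_swap_j hrep hanti (fun i => LinearMap.mk₂ k
      (fun u v => ⁅A i, u⁆ ⊗ₜ[k] (⁅x, B i⁆ ⊗ₜ[k] v))
      (by intros; simp only [add_lie, lie_add, add_tmul, tmul_add, smul_lie, lie_smul, ← smul_tmul', tmul_smul])
      (by intros; simp only [add_lie, lie_add, add_tmul, tmul_add, smul_lie, lie_smul, ← smul_tmul', tmul_smul])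
      (by intros; simp only [add_lie, lie_add, add_tmul, tmul_add, smul_lie, lie_smul, ← smul_tmul', tmul_smul]) (by intros; simp only [add_lie, lie_add, add_tmul, tmul_add, smul_lie, lie_smul, ← smul_tmul', tmul_smul]))
  -- the nine vanishing groups
  have g1 : (∑ i, ∑ j, ⁅⁅x, A i⁆, A j⁆ ⊗ₜ[k] (B j ⊗ₜ[k] B i))
      + (∑ i, ∑ j, ⁅⁅x, A i⁆, B j⁆ ⊗ₜ[k] (B i ⊗ₜ[k] A j))
      + (∑ i, ∑ j, ⁅x, ⁅A i, A j⁆⁆ ⊗ₜ[k] (B i ⊗ₜ[k] B j)) = 0 := by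
    rw [h10, show (∑ i, ∑ j, ⁅⁅x, A i⁆, A j⁆ ⊗ₜ[k] (B j ⊗ₜ[k] B i)) =
      ∑ i, ∑ j, ⁅⁅x, A j⁆, A i⁆ ⊗ₜ[k] (B i ⊗ₜ[k] B j) from Finset.sum_comm]
    refine cancel3 ?_
    rw [← Finset.sum_add_distrib]
    refine Finset.sum_congr rfl fun i _ => ?_
    rw [← Finset.sum_add_distrib]
    refine Finset.sum_congr rfl fun j _ => ?_
    rw [← TensorProduct.add_tmul, jac3]
  have g2 : (∑ i, ∑ j, A j ⊗ₜ[k] (⁅⁅x, A i⁆, B j⁆ ⊗ₜ[k] B i))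
      + (∑ i, ∑ j, B i ⊗ₜ[k] (⁅⁅x, A i⁆, A j⁆ ⊗ₜ[k] B j))
      + (∑ i, ∑ j, A i ⊗ₜ[k] (⁅x, ⁅B i, A j⁆⁆ ⊗ₜ[k] B j)) = 0 := by
    rw [h5, show (∑ i, ∑ j, A j ⊗ₜ[k] (⁅⁅x, A i⁆, B j⁆ ⊗ₜ[k] B i)) =
      ∑ i, ∑ j, A i ⊗ₜ[k] (⁅⁅x, A j⁆, B i⁆ ⊗ₜ[k] B j) from Finset.sum_comm]
    refine cancel3 ?_
    rw [← Finset.sum_add_distrib]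
    refine Finset.sum_congr rfl fun i _ => ?_
    rw [← Finset.sum_add_distrib]
    refine Finset.sum_congr rfl fun j _ => ?_
    rw [← TensorProduct.tmul_add, ← TensorProduct.add_tmul, jac3]
  have g3 : (∑ i, ∑ j, B i ⊗ₜ[k] (A j ⊗ₜ[k] ⁅⁅x, A i⁆, B j⁆))
      + (∑ i, ∑ j, B j ⊗ₜ[k] (B i ⊗ₜ[k] ⁅⁅x, A i⁆, A j⁆))
      + (∑ i, ∑ j, A i ⊗ₜ[k] (A j ⊗ₜ[k] ⁅x, ⁅B i, B j⁆⁆)) = 0 := by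
    rw [h6, h9a, h9b, neg_neg, show (∑ i, ∑ j, A j ⊗ₜ[k] (A i ⊗ₜ[k] ⁅⁅x, B i⁆, B j⁆)) =
      ∑ i, ∑ j, A i ⊗ₜ[k] (A j ⊗ₜ[k] ⁅⁅x, B j⁆, B i⁆) from Finset.sum_comm]
    refine cancel3' ?_
    rw [← Finset.sum_add_distrib]
    refine Finset.sum_congr rfl fun i _ => ?_
    rw [← Finset.sum_add_distrib]
    refine Finset.sum_congr rfl fun j _ => ?_
    rw [← TensorProduct.tmul_add, ← TensorProduct.tmul_add, jac3]
  have g4 : (∑ i, ∑ j, ⁅A i, A j⁆ ⊗ₜ[k] (B j ⊗ₜ[k] ⁅x, B i⁆))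
      + (∑ i, ∑ j, ⁅A i, A j⁆ ⊗ₜ[k] (B i ⊗ₜ[k] ⁅x, B j⁆)) = 0 := by
    rw [show (∑ i, ∑ j, ⁅A i, A j⁆ ⊗ₜ[k] (B j ⊗ₜ[k] ⁅x, B i⁆)) =
      ∑ i, ∑ j, ⁅A j, A i⁆ ⊗ₜ[k] (B i ⊗ₜ[k] ⁅x, B j⁆) from Finset.sum_comm,
      ← Finset.sum_add_distrib]
    refine Finset.sum_eq_zero fun i _ => ?_
    rw [← Finset.sum_add_distrib]
    refine Finset.sum_eq_zero fun j _ => ?_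
    rw [← TensorProduct.add_tmul, skew0, TensorProduct.zero_tmul]
  have g5 : (∑ i, ∑ j, A j ⊗ₜ[k] (⁅A i, B j⁆ ⊗ₜ[k] ⁅x, B i⁆))
      + (∑ i, ∑ j, A i ⊗ₜ[k] (⁅B i, A j⁆ ⊗ₜ[k] ⁅x, B j⁆)) = 0 := by
    rw [show (∑ i, ∑ j, A j ⊗ₜ[k] (⁅A i, B j⁆ ⊗ₜ[k] ⁅x, B i⁆)) =
      ∑ i, ∑ j, A i ⊗ₜ[k] (⁅A j, B i⁆ ⊗ₜ[k] ⁅x, B j⁆) from Finset.sum_comm,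
      ← Finset.sum_add_distrib]
    refine Finset.sum_eq_zero fun i _ => ?_
    rw [← Finset.sum_add_distrib]
    refine Finset.sum_eq_zero fun j _ => ?_
    rw [← TensorProduct.tmul_add, ← TensorProduct.add_tmul, skew0,
      TensorProduct.zero_tmul, TensorProduct.tmul_zero]
  have g6 : (∑ i, ∑ j, ⁅x, B i⁆ ⊗ₜ[k] (⁅A i, A j⁆ ⊗ₜ[k] B j))
      + (∑ i, ∑ j, ⁅x, A i⁆ ⊗ₜ[k] (⁅B i, A j⁆ ⊗ₜ[k] B j)) = 0 := by
    rw [h7, neg_add_cancel]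
  have g7 : (∑ i, ∑ j, ⁅x, B i⁆ ⊗ₜ[k] (A j ⊗ₜ[k] ⁅A i, B j⁆))
      + (∑ i, ∑ j, ⁅x, A i⁆ ⊗ₜ[k] (A j ⊗ₜ[k] ⁅B i, B j⁆)) = 0 := by
    rw [h8, neg_add_cancel]
  have g8 : (∑ i, ∑ j, B j ⊗ₜ[k] (⁅x, B i⁆ ⊗ₜ[k] ⁅A i, A j⁆))
      + (∑ i, ∑ j, A i ⊗ₜ[k] (⁅x, A j⁆ ⊗ₜ[k] ⁅B i, B j⁆)) = 0 := by
    rw [h11a, h11b, neg_neg, show (∑ i, ∑ j, A j ⊗ₜ[k] (⁅x, A i⁆ ⊗ₜ[k] ⁅B i, B j⁆)) =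
      ∑ i, ∑ j, A i ⊗ₜ[k] (⁅x, A j⁆ ⊗ₜ[k] ⁅B j, B i⁆) from Finset.sum_comm,
      ← Finset.sum_add_distrib]
    refine Finset.sum_eq_zero fun i _ => ?_
    rw [← Finset.sum_add_distrib]
    refine Finset.sum_eq_zero fun j _ => ?_
    rw [← TensorProduct.tmul_add, ← TensorProduct.tmul_add, skew0,
      TensorProduct.tmul_zero, TensorProduct.tmul_zero]
  have g9 : (∑ i, ∑ j, ⁅A i, B j⁆ ⊗ₜ[k] (⁅x, B i⁆ ⊗ₜ[k] A j))
      + (∑ i, ∑ j, ⁅A i, A j⁆ ⊗ₜ[k] (⁅x, B i⁆ ⊗ₜ[k] B j)) = 0 := by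
    rw [h12, neg_add_cancel]
  -- assemble
  rw [show
    (∑ i, ∑ j, ⁅⁅x, A i⁆, A j⁆ ⊗ₜ[k] (B j ⊗ₜ[k] B i))
      + (∑ i, ∑ j, A j ⊗ₜ[k] (⁅⁅x, A i⁆, B j⁆ ⊗ₜ[k] B i))
      + (∑ i, ∑ j, ⁅A i, A j⁆ ⊗ₜ[k] (B j ⊗ₜ[k] ⁅x, B i⁆))
      + (∑ i, ∑ j, A j ⊗ₜ[k] (⁅A i, B j⁆ ⊗ₜ[k] ⁅x, B i⁆))
      + ((∑ i, ∑ j, B i ⊗ₜ[k] (⁅⁅x, A i⁆, A j⁆ ⊗ₜ[k] B j))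
        + (∑ i, ∑ j, B i ⊗ₜ[k] (A j ⊗ₜ[k] ⁅⁅x, A i⁆, B j⁆))
        + (∑ i, ∑ j, ⁅x, B i⁆ ⊗ₜ[k] (⁅A i, A j⁆ ⊗ₜ[k] B j))
        + (∑ i, ∑ j, ⁅x, B i⁆ ⊗ₜ[k] (A j ⊗ₜ[k] ⁅A i, B j⁆)))
      + ((∑ i, ∑ j, B j ⊗ₜ[k] (B i ⊗ₜ[k] ⁅⁅x, A i⁆, A j⁆))
        + (∑ i, ∑ j, ⁅⁅x, A i⁆, B j⁆ ⊗ₜ[k] (B i ⊗ₜ[k] A j))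
        + (∑ i, ∑ j, B j ⊗ₜ[k] (⁅x, B i⁆ ⊗ₜ[k] ⁅A i, A j⁆))
        + (∑ i, ∑ j, ⁅A i, B j⁆ ⊗ₜ[k] (⁅x, B i⁆ ⊗ₜ[k] A j)))
    =
    ((∑ i, ∑ j, ⁅⁅x, A i⁆, A j⁆ ⊗ₜ[k] (B j ⊗ₜ[k] B i))
      + (∑ i, ∑ j, ⁅⁅x, A i⁆, B j⁆ ⊗ₜ[k] (B i ⊗ₜ[k] A j))
      + (∑ i, ∑ j, ⁅x, ⁅A i, A j⁆⁆ ⊗ₜ[k] (B i ⊗ₜ[k] B j)))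
    + ((∑ i, ∑ j, A j ⊗ₜ[k] (⁅⁅x, A i⁆, B j⁆ ⊗ₜ[k] B i))
      + (∑ i, ∑ j, B i ⊗ₜ[k] (⁅⁅x, A i⁆, A j⁆ ⊗ₜ[k] B j))
      + (∑ i, ∑ j, A i ⊗ₜ[k] (⁅x, ⁅B i, A j⁆⁆ ⊗ₜ[k] B j)))
    + ((∑ i, ∑ j, B i ⊗ₜ[k] (A j ⊗ₜ[k] ⁅⁅x, A i⁆, B j⁆))
      + (∑ i, ∑ j, B j ⊗ₜ[k] (B i ⊗ₜ[k] ⁅⁅x, A i⁆, A j⁆))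
      + (∑ i, ∑ j, A i ⊗ₜ[k] (A j ⊗ₜ[k] ⁅x, ⁅B i, B j⁆⁆)))
    + ((∑ i, ∑ j, ⁅A i, A j⁆ ⊗ₜ[k] (B j ⊗ₜ[k] ⁅x, B i⁆))
      + (∑ i, ∑ j, ⁅A i, A j⁆ ⊗ₜ[k] (B i ⊗ₜ[k] ⁅x, B j⁆)))
    + ((∑ i, ∑ j, A j ⊗ₜ[k] (⁅A i, B j⁆ ⊗ₜ[k] ⁅x, B i⁆))
      + (∑ i, ∑ j, A i ⊗ₜ[k] (⁅B i, A j⁆ ⊗ₜ[k] ⁅x, B j⁆)))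
    + ((∑ i, ∑ j, ⁅x, B i⁆ ⊗ₜ[k] (⁅A i, A j⁆ ⊗ₜ[k] B j))
      + (∑ i, ∑ j, ⁅x, A i⁆ ⊗ₜ[k] (⁅B i, A j⁆ ⊗ₜ[k] B j)))
    + ((∑ i, ∑ j, ⁅x, B i⁆ ⊗ₜ[k] (A j ⊗ₜ[k] ⁅A i, B j⁆))
      + (∑ i, ∑ j, ⁅x, A i⁆ ⊗ₜ[k] (A j ⊗ₜ[k] ⁅B i, B j⁆)))
    + ((∑ i, ∑ j, B j ⊗ₜ[k] (⁅x, B i⁆ ⊗ₜ[k] ⁅A i, A j⁆))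
      + (∑ i, ∑ j, A i ⊗ₜ[k] (⁅x, A j⁆ ⊗ₜ[k] ⁅B i, B j⁆)))
    + ((∑ i, ∑ j, ⁅A i, B j⁆ ⊗ₜ[k] (⁅x, B i⁆ ⊗ₜ[k] A j))
      + (∑ i, ∑ j, ⁅A i, A j⁆ ⊗ₜ[k] (⁅x, B i⁆ ⊗ₜ[k] B j)))
    - ((∑ i, ∑ j, ⁅x, ⁅A i, A j⁆⁆ ⊗ₜ[k] (B i ⊗ₜ[k] B j))
        + (∑ i, ∑ j, ⁅A i, A j⁆ ⊗ₜ[k] (⁅x, B i⁆ ⊗ₜ[k] B j))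
        + (∑ i, ∑ j, ⁅A i, A j⁆ ⊗ₜ[k] (B i ⊗ₜ[k] ⁅x, B j⁆))
        + (∑ i, ∑ j, ⁅x, A i⁆ ⊗ₜ[k] (⁅B i, A j⁆ ⊗ₜ[k] B j))
        + (∑ i, ∑ j, A i ⊗ₜ[k] (⁅x, ⁅B i, A j⁆⁆ ⊗ₜ[k] B j))
        + (∑ i, ∑ j, A i ⊗ₜ[k] (⁅B i, A j⁆ ⊗ₜ[k] ⁅x, B j⁆))
        + (∑ i, ∑ j, ⁅x, A i⁆ ⊗ₜ[k] (A j ⊗ₜ[k] ⁅B i, B j⁆))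
        + (∑ i, ∑ j, A i ⊗ₜ[k] (⁅x, A j⁆ ⊗ₜ[k] ⁅B i, B j⁆))
        + (∑ i, ∑ j, A i ⊗ₜ[k] (A j ⊗ₜ[k] ⁅x, ⁅B i, B j⁆⁆)))
    from by abel]
  rw [g1, g2, g3, g4, g5, g6, g7, g8, g9, hz]
  simp
end

section
/- Let a be a Lie algebra over a field of characteristic 0, r ∈ ∧²(a), and δ(x) = [r, x⊗1 + 1⊗x]. Then the cyclic sum of (δ ⊗ id)(r) equals 2Z: (id + c + c²)((δ ⊗ id)(r)) = 2([r^{12},r^{13}] + [r^{12},r^{23}] + [r^{13},r^{23}]), where c is the cyclic permutation of tensor factors of a^{⊗3}. -/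
open scoped TensorProduct

section aux
variable {k : Type*} [Field k] {a : Type*} [LieRing a] [LieAlgebra k a]
variable {N : ℕ} {A B : Fin N → a}

private lemma lie_sum' {M : Type*} [AddCommGroup M] [Module k M]
    [LieRingModule a M] [LieModule k a M]
    (x : a) (f : Fin N → M) : ⁅x, ∑ i, f i⁆ = ∑ i, ⁅x, f i⁆ :=
  map_sum (LieModule.toEnd k a M x) f Finset.univ

private lemma swap_sum {M : Type*} [AddCommGroup M] [Module k M]
    (hanti : (TensorProduct.comm k a a) (∑ i, A i ⊗ₜ[k] B i)
      = -(∑ i, A i ⊗ₜ[k] B i))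
    (F : a →ₗ[k] a →ₗ[k] M) :
    ∑ i, F (A i) (B i) = -∑ i, F (B i) (A i) := by
  have h1 : TensorProduct.lift F (∑ i, A i ⊗ₜ[k] B i) = ∑ i, F (A i) (B i) := by
    rw [map_sum]; simp
  have h2 : TensorProduct.lift F ((TensorProduct.comm k a a) (∑ i, A i ⊗ₜ[k] B i))
      = ∑ i, F (B i) (A i) := by
    rw [map_sum, map_sum]; simp
  rw [hanti, map_neg, h1] at h2
  rw [← h2, neg_neg]

private lemma L1
    (hanti : (TensorProduct.comm k a a) (∑ i, A i ⊗ₜ[k] B i) = -(∑ i, A i ⊗ₜ[k] B i)) :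
    ∑ j, ∑ i, B j ⊗ₜ[k] (⁅A i, A j⁆ ⊗ₜ[k] B i)
      = ∑ j, ∑ i, A i ⊗ₜ[k] (⁅B i, A j⁆ ⊗ₜ[k] B j) := by
  have h1 : ∀ u v : a, ⁅u, v⁆ = -⁅v, u⁆ := fun u v => (lie_skew (x := u) (y := v)).symm
  rw [Finset.sum_comm]
  refine Eq.trans (Finset.sum_congr rfl fun i _ => ?_) rfl
  have key := swap_sum hanti (LinearMap.mk₂ k
      (fun x y => y ⊗ₜ[k] (⁅A i, x⁆ ⊗ₜ[k] B i))
      (fun m n p => by simp [lie_add, TensorProduct.tmul_add, TensorProduct.add_tmul])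
      (fun c m n => by simp [lie_smul, ← TensorProduct.smul_tmul', TensorProduct.tmul_smul])
      (fun m n p => by simp [TensorProduct.add_tmul])
      (fun c m n => by simp [← TensorProduct.smul_tmul', TensorProduct.tmul_smul]))
  replace key : ∑ j, B j ⊗ₜ[k] (⁅A i, A j⁆ ⊗ₜ[k] B i) = -∑ j, A j ⊗ₜ[k] (⁅A i, B j⁆ ⊗ₜ[k] B i) := key
  rw [key, ← Finset.sum_neg_distrib]
  refine Finset.sum_congr rfl fun j _ => ?_
  rw [h1 (B j) (A i)]
  simp only [TensorProduct.neg_tmul, TensorProduct.tmul_neg]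

private lemma L2
    (hanti : (TensorProduct.comm k a a) (∑ i, A i ⊗ₜ[k] B i) = -(∑ i, A i ⊗ₜ[k] B i)) :
    ∑ j, ∑ i, B j ⊗ₜ[k] (A i ⊗ₜ[k] ⁅B i, A j⁆)
      = ∑ j, ∑ i, A i ⊗ₜ[k] (A j ⊗ₜ[k] ⁅B i, B j⁆) := by
  have h1 : ∀ u v : a, ⁅u, v⁆ = -⁅v, u⁆ := fun u v => (lie_skew (x := u) (y := v)).symm
  rw [Finset.sum_comm]
  refine Eq.trans (Finset.sum_congr rfl fun i _ => ?_) rfl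
  have key := swap_sum hanti (LinearMap.mk₂ k
      (fun x y => y ⊗ₜ[k] (A i ⊗ₜ[k] ⁅B i, x⁆))
      (fun m n p => by simp [lie_add, TensorProduct.tmul_add, TensorProduct.add_tmul])
      (fun c m n => by simp [lie_smul, ← TensorProduct.smul_tmul', TensorProduct.tmul_smul])
      (fun m n p => by simp [TensorProduct.add_tmul])
      (fun c m n => by simp [← TensorProduct.smul_tmul', TensorProduct.tmul_smul]))
  replace key : ∑ j, B j ⊗ₜ[k] (A i ⊗ₜ[k] ⁅B i, A j⁆) = -∑ j, A j ⊗ₜ[k] (A i ⊗ₜ[k] ⁅B i, B j⁆) := key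
  rw [key, ← Finset.sum_neg_distrib]
  refine Finset.sum_congr rfl fun j _ => ?_
  rw [h1 (B j) (B i)]
  simp only [TensorProduct.neg_tmul, TensorProduct.tmul_neg]

private lemma L3
    (hanti : (TensorProduct.comm k a a) (∑ i, A i ⊗ₜ[k] B i) = -(∑ i, A i ⊗ₜ[k] B i)) :
    ∑ j, ∑ i, B i ⊗ₜ[k] (B j ⊗ₜ[k] ⁅A i, A j⁆)
      = ∑ j, ∑ i, A i ⊗ₜ[k] (A j ⊗ₜ[k] ⁅B i, B j⁆) := by
  have step1 : ∀ j, ∑ i, B i ⊗ₜ[k] (B j ⊗ₜ[k] ⁅A i, A j⁆)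
      = -∑ i, A i ⊗ₜ[k] (B j ⊗ₜ[k] ⁅B i, A j⁆) := by
    intro j
    have key := swap_sum hanti (LinearMap.mk₂ k
        (fun x y => y ⊗ₜ[k] (B j ⊗ₜ[k] ⁅x, A j⁆))
        (fun m n p => by simp [add_lie, TensorProduct.tmul_add, TensorProduct.add_tmul])
        (fun c m n => by simp [smul_lie, ← TensorProduct.smul_tmul', TensorProduct.tmul_smul])
        (fun m n p => by simp [TensorProduct.add_tmul])
        (fun c m n => by simp [← TensorProduct.smul_tmul', TensorProduct.tmul_smul]))
    exact key
  have step2 : ∀ i, ∑ j, A i ⊗ₜ[k] (B j ⊗ₜ[k] ⁅B i, A j⁆)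
      = -∑ j, A i ⊗ₜ[k] (A j ⊗ₜ[k] ⁅B i, B j⁆) := by
    intro i
    have key := swap_sum hanti (LinearMap.mk₂ k
        (fun x y => A i ⊗ₜ[k] (y ⊗ₜ[k] ⁅B i, x⁆))
        (fun m n p => by simp [lie_add, TensorProduct.tmul_add, TensorProduct.add_tmul])
        (fun c m n => by simp [lie_smul, ← TensorProduct.smul_tmul', TensorProduct.tmul_smul])
        (fun m n p => by simp [TensorProduct.tmul_add, TensorProduct.add_tmul])
        (fun c m n => by simp [← TensorProduct.smul_tmul', TensorProduct.tmul_smul]))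
    dsimp only [LinearMap.mk₂_apply] at key
    exact key
  calc ∑ j, ∑ i, B i ⊗ₜ[k] (B j ⊗ₜ[k] ⁅A i, A j⁆)
      = ∑ j, -∑ i, A i ⊗ₜ[k] (B j ⊗ₜ[k] ⁅B i, A j⁆) :=
        Finset.sum_congr rfl fun j _ => step1 j
    _ = -∑ j, ∑ i, A i ⊗ₜ[k] (B j ⊗ₜ[k] ⁅B i, A j⁆) := by rw [Finset.sum_neg_distrib]
    _ = -∑ i, ∑ j, A i ⊗ₜ[k] (B j ⊗ₜ[k] ⁅B i, A j⁆) := by rw [Finset.sum_comm]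
    _ = -∑ i, -∑ j, A i ⊗ₜ[k] (A j ⊗ₜ[k] ⁅B i, B j⁆) :=
        congrArg Neg.neg (Finset.sum_congr rfl fun i _ => step2 i)
    _ = ∑ i, ∑ j, A i ⊗ₜ[k] (A j ⊗ₜ[k] ⁅B i, B j⁆) := by
        rw [Finset.sum_neg_distrib, neg_neg]
    _ = ∑ j, ∑ i, A i ⊗ₜ[k] (A j ⊗ₜ[k] ⁅B i, B j⁆) := Finset.sum_comm
private lemma L4
    (hanti : (TensorProduct.comm k a a) (∑ i, A i ⊗ₜ[k] B i) = -(∑ i, A i ⊗ₜ[k] B i)) :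
    ∑ j, ∑ i, ⁅B i, A j⁆ ⊗ₜ[k] (B j ⊗ₜ[k] A i)
      = ∑ j, ∑ i, ⁅A i, A j⁆ ⊗ₜ[k] (B i ⊗ₜ[k] B j) := by
  have h1 : ∀ u v : a, ⁅u, v⁆ = -⁅v, u⁆ := fun u v => (lie_skew (x := u) (y := v)).symm
  have step1 : ∀ j, ∑ i, ⁅B i, A j⁆ ⊗ₜ[k] (B j ⊗ₜ[k] A i)
      = -∑ i, ⁅A i, A j⁆ ⊗ₜ[k] (B j ⊗ₜ[k] B i) := by
    intro j
    have key := swap_sum hanti (LinearMap.mk₂ k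
        (fun x y => ⁅y, A j⁆ ⊗ₜ[k] (B j ⊗ₜ[k] x))
        (fun m n p => by simp [TensorProduct.tmul_add, TensorProduct.add_tmul])
        (fun c m n => by simp [← TensorProduct.smul_tmul', TensorProduct.tmul_smul])
        (fun m n p => by simp [add_lie, TensorProduct.add_tmul])
        (fun c m n => by simp [smul_lie, ← TensorProduct.smul_tmul', TensorProduct.tmul_smul]))
    dsimp only [LinearMap.mk₂_apply] at key
    exact key
  calc ∑ j, ∑ i, ⁅B i, A j⁆ ⊗ₜ[k] (B j ⊗ₜ[k] A i)
      = -∑ j, ∑ i, ⁅A i, A j⁆ ⊗ₜ[k] (B j ⊗ₜ[k] B i) := by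
        rw [← Finset.sum_neg_distrib]; exact Finset.sum_congr rfl fun j _ => step1 j
    _ = -∑ i, ∑ j, ⁅A i, A j⁆ ⊗ₜ[k] (B j ⊗ₜ[k] B i) := by rw [Finset.sum_comm]
    _ = ∑ i, ∑ j, ⁅A j, A i⁆ ⊗ₜ[k] (B j ⊗ₜ[k] B i) := by
        rw [← Finset.sum_neg_distrib]
        refine Finset.sum_congr rfl fun i _ => ?_
        rw [← Finset.sum_neg_distrib]
        refine Finset.sum_congr rfl fun j _ => ?_
        rw [h1 (A j) (A i)]
        simp only [TensorProduct.neg_tmul, TensorProduct.tmul_neg]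
    _ = ∑ j, ∑ i, ⁅A i, A j⁆ ⊗ₜ[k] (B i ⊗ₜ[k] B j) := rfl

end aux

/-- For `r ∈ ∧²(a)` and `δ(x) = [r, x⊗1+1⊗x]`, the cyclic sum of
`(δ ⊗ id)(r)` equals `2Z = 2([r¹²,r¹³]+[r¹²,r²³]+[r¹³,r²³])`. -/
theorem cyclic_sum_cobracket_r_eq_two_CYB
    (k : Type*) [Field k] [CharZero k]
    (a : Type*) [LieRing a] [LieAlgebra k a]
    (N : ℕ) (A B : Fin N → a)
    (r : a ⊗[k] a) (hrep : r = ∑ i, A i ⊗ₜ[k] B i)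
    (hanti : (TensorProduct.comm k a a) r = -r) :
    cobracketTensorId k a r r
      + cyclicPerm k a (cobracketTensorId k a r r)
      + cyclicPerm k a (cyclicPerm k a (cobracketTensorId k a r r))
      = (2 : k) • cybElement k a N A B := by
  subst hrep
  have h1 : ∀ u v : a, ⁅u, v⁆ = -⁅v, u⁆ := fun u v => (lie_skew (x := u) (y := v)).symm
  have hδ : ∀ x, coboundaryCobracket k a (∑ i, A i ⊗ₜ[k] B i) x
      = ∑ i, (⁅A i, x⁆ ⊗ₜ[k] B i + A i ⊗ₜ[k] ⁅B i, x⁆) := by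
    intro x
    show -⁅x, ∑ i, A i ⊗ₜ[k] B i⁆ = _
    rw [lie_sum' (k := k), ← Finset.sum_neg_distrib]
    refine Finset.sum_congr rfl fun i _ => ?_
    rw [TensorProduct.LieModule.lie_tmul_right]
    rw [h1 (A i) x, h1 (B i) x]
    rw [TensorProduct.neg_tmul, TensorProduct.tmul_neg, neg_add]
  have hX : cobracketTensorId k a (∑ i, A i ⊗ₜ[k] B i) (∑ i, A i ⊗ₜ[k] B i)
      = ∑ j, ∑ i, (⁅A i, A j⁆ ⊗ₜ[k] (B i ⊗ₜ[k] B j)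
          + A i ⊗ₜ[k] (⁅B i, A j⁆ ⊗ₜ[k] B j)) := by
    unfold cobracketTensorId
    rw [map_sum, map_sum]
    refine Finset.sum_congr rfl fun j _ => ?_
    rw [LinearMap.rTensor_tmul, hδ (A j), TensorProduct.sum_tmul, map_sum]
    refine Finset.sum_congr rfl fun i _ => ?_
    rw [TensorProduct.add_tmul, map_add, TensorProduct.assoc_tmul, TensorProduct.assoc_tmul]
  have hperm : ∀ x y z : a, cyclicPerm k a (x ⊗ₜ[k] (y ⊗ₜ[k] z)) = z ⊗ₜ[k] (x ⊗ₜ[k] y) :=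
    fun _ _ _ => rfl
  rw [hX]
  simp only [map_sum, map_add, hperm]
  rw [show (2 : k) • cybElement k a N A B = cybElement k a N A B + cybElement k a N A B from
    two_smul k _]
  unfold cybElement
  rw [Finset.sum_comm (f := fun i j =>
    (⁅A i, A j⁆ ⊗ₜ[k] (B i ⊗ₜ[k] B j)
      + A i ⊗ₜ[k] (⁅B i, A j⁆ ⊗ₜ[k] B j)
      + A i ⊗ₜ[k] (A j ⊗ₜ[k] ⁅B i, B j⁆)))]
  simp only [Finset.sum_add_distrib]
  rw [L1 hanti, L2 hanti, L3 hanti, L4 hanti]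
  abel
end

section
/- Let V be a vector space over a field of characteristic 0 and S(V) its symmetric algebra, equipped with the bialgebra structure for which every element of V is primitive (Δ(v) = v⊗1 + 1⊗v for v ∈ V). Then the space of primitive elements of S(V) is exactly V: {x ∈ S(V) : Δ(x) = x⊗1 + 1⊗x} = V. -/
open scoped TensorProduct
open MvPolynomial

private lemma degree_one_eq_single {σ : Type*} {m : σ →₀ ℕ}
    (h : (m.sum fun _ n => n) = 1) : ∃ i, m = Finsupp.single i 1 := by
  classical
  have hne : m.support.Nonempty := by
    rw [Finset.nonempty_iff_ne_empty]
    intro he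
    rw [Finsupp.sum, he, Finset.sum_empty] at h
    exact one_ne_zero h.symm
  obtain ⟨i, hi⟩ := hne
  refine ⟨i, ?_⟩
  have h1 : 1 ≤ m i := Nat.one_le_iff_ne_zero.2 (Finsupp.mem_support_iff.1 hi)
  have h2 : m i ≤ 1 := h ▸ Finset.single_le_sum (fun j _ => Nat.zero_le (m j)) hi
  ext j
  rcases eq_or_ne j i with rfl | hj
  · simp; omega
  · rw [Finsupp.single_eq_of_ne' (Ne.symm hj)]
    by_contra hj0
    have hjs : j ∈ m.support := Finsupp.mem_support_iff.2 hj0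
    have hj1 : 1 ≤ m j := Nat.one_le_iff_ne_zero.2 hj0
    have hle : m i + m j ≤ m.sum fun _ n => n := by
      rw [Finsupp.sum]
      have hsub : ({i, j} : Finset σ) ⊆ m.support := by
        intro x hx
        simp only [Finset.mem_insert, Finset.mem_singleton] at hx
        rcases hx with rfl | rfl <;> assumption
      have := Finset.sum_le_sum_of_subset (f := fun x => m x) hsub
      rwa [Finset.sum_pair (Ne.symm hj)] at this
    omega

private lemma aeval_monomial_two {k : Type*} [CommSemiring k] {σ : Type*}
    (m : σ →₀ ℕ) (c : k) :
    aeval (fun i => C (2:k) * X i) (monomial m c)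
      = monomial m (2 ^ (m.sum fun _ n => n) * c) := by
  classical
  rw [aeval_monomial, monomial_eq]
  simp only [mul_pow, ← map_pow]
  rw [Finsupp.prod, Finset.prod_mul_distrib, ← map_prod, Finset.prod_pow_eq_pow_sum,
    algebraMap_eq, map_mul, Finsupp.sum, Finsupp.prod]
  ring

private lemma coeff_aeval_two {k : Type*} [CommSemiring k] {σ : Type*}
    (p : MvPolynomial σ k) (m : σ →₀ ℕ) :
    coeff m (aeval (fun i => C (2:k) * X i) p)
      = 2 ^ (m.sum fun _ n => n) * coeff m p := by
  classical
  induction p using MvPolynomial.induction_on' with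
  | monomial m' c =>
      rw [aeval_monomial_two, coeff_monomial, coeff_monomial]
      split
      · next h => subst h; rfl
      · rw [mul_zero]
  | add p q hp hq =>
      rw [map_add, coeff_add, coeff_add, hp, hq, mul_add]

/-- In the symmetric algebra `S(V)` (realized as the polynomial
algebra `MvPolynomial σ k` on a basis `σ` of `V`) over a field of characteristic 0,
equipped with the bialgebra structure for which the elements of `V` are primitive,
the set of primitive elements is exactly `V` (the span of the variables). -/
theorem primitives_of_symmetric_algebra
    (k : Type*) [Field k] [CharZero k] (σ : Type*) :
    {p : MvPolynomial σ k |
      (MvPolynomial.aeval fun i =>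
        ((MvPolynomial.X i) ⊗ₜ[k] (1 : MvPolynomial σ k)
          + (1 : MvPolynomial σ k) ⊗ₜ[k] (MvPolynomial.X i) :
          MvPolynomial σ k ⊗[k] MvPolynomial σ k)) p
        = p ⊗ₜ[k] (1 : MvPolynomial σ k) + (1 : MvPolynomial σ k) ⊗ₜ[k] p}
    = (Submodule.span k (Set.range (MvPolynomial.X : σ → MvPolynomial σ k)) :
        Set (MvPolynomial σ k)) := by
  classical
  ext p
  simp only [Set.mem_setOf_eq, SetLike.mem_coe]
  constructor
  · intro hp
    have key : (aeval fun i => C (2:k) * X i) p = C (2:k) * p := by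
      have h := congrArg (Algebra.TensorProduct.lmul' (S := MvPolynomial σ k) k) hp
      rw [← AlgHom.comp_apply, comp_aeval] at h
      have h2 : ∀ i : σ, (Algebra.TensorProduct.lmul' (S := MvPolynomial σ k) k)
          (X i ⊗ₜ[k] 1 + 1 ⊗ₜ[k] X i) = C (2:k) * X i := by
        intro i
        rw [map_add, Algebra.TensorProduct.lmul'_apply_tmul,
          Algebra.TensorProduct.lmul'_apply_tmul]
        rw [C_eq_smul_one]
        ring_nf
        rw [two_smul]
        ring
      simp only [Function.comp_def, h2] at h
      rw [h, map_add, Algebra.TensorProduct.lmul'_apply_tmul,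
        Algebra.TensorProduct.lmul'_apply_tmul, one_mul, mul_one, C_eq_smul_one, two_smul]
      ring
    have hz : ∀ m : σ →₀ ℕ, (m.sum fun _ n => n) ≠ 1 → coeff m p = 0 := by
      intro m hm
      have h := congrArg (coeff m) key
      rw [coeff_aeval_two, coeff_C_mul] at h
      have hd : (2:k) ^ (m.sum fun _ n => n) ≠ 2 := by
        intro he
        have : ((2 ^ (m.sum fun _ n => n) : ℕ) : k) = ((2 ^ 1 : ℕ) : k) := by
          push_cast; simpa using he
        have := Nat.cast_injective this
        exact hm (Nat.pow_right_injective le_rfl this)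
      by_contra hc
      exact hd (mul_right_cancel₀ hc h)
    rw [p.as_sum]
    apply Submodule.sum_mem
    intro m hm
    have hd : (m.sum fun _ n => n) = 1 := by
      by_contra h
      exact (mem_support_iff.1 hm) (hz m h)
    obtain ⟨i, rfl⟩ := degree_one_eq_single hd
    have : monomial (Finsupp.single i 1) (coeff (Finsupp.single i 1) p)
        = (coeff (Finsupp.single i 1) p) • X i := by
      rw [X, smul_monomial, smul_eq_mul, mul_one]
    rw [this]
    exact Submodule.smul_mem _ _ (Submodule.subset_span ⟨i, rfl⟩)
  · intro hp
    induction hp using Submodule.span_induction with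
    | mem x hx =>
        obtain ⟨i, rfl⟩ := hx
        rw [aeval_X]
    | zero => simp
    | add x y _ _ hx hy =>
        rw [map_add, hx, hy, TensorProduct.add_tmul, TensorProduct.tmul_add]
        abel
    | smul c x _ hx =>
        rw [map_smul, hx, smul_add, TensorProduct.smul_tmul', TensorProduct.tmul_smul]
end

section
/- Let H be a topologically free bialgebra over k[[ħ]] (k a field of characteristic 0), with coproduct Δ and counit ε, and let Δ^{21} := flip ∘ Δ denote the coopposite coproduct. Suppose G' ∈ (H ⊗̂ H)^× satisfies: G' ≡ 1⊗1 mod ħ; the counit conditions (ε⊗id)(G') = (id⊗ε)(G') = 1; the cocycle equation (G'⊗1)(Δ⊗id)(G') = (1⊗G')(id⊗Δ)(G'); and Ad(G')∘Δ = Δ^{21}. Define 𝒢 := (G')^{21}·G' and G := G'·𝒢^{-1/2}, where 𝒢^{-1/2} is the unique square root of 𝒢^{-1} congruent to 1⊗1 mod ħ. Then G is again a counital cocycle twist with Ad(G)∘Δ = Δ^{21}, and moreover G·G^{21} = G^{21}·G = 1⊗1. -/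
open scoped TensorProduct
open Coalgebra

/-- `ħ`-adic separatedness of a module over `k[[ħ]]`. -/
def HbarSeparated (k : Type*) [Field k] (M : Type*) [AddCommGroup M]
    [Module (PowerSeries k) M] : Prop :=
  ∀ z : M, (∀ n : ℕ, ∃ w : M, z = ((PowerSeries.X : PowerSeries k) ^ n) • w) → z = 0

/-- `ħ`-adic completeness of a module over `k[[ħ]]`. -/
def HbarComplete (k : Type*) [Field k] (M : Type*) [AddCommGroup M]
    [Module (PowerSeries k) M] : Prop :=
  ∀ a : ℕ → M,
    (∀ n : ℕ, ∃ w : M, a (n + 1) - a n = ((PowerSeries.X : PowerSeries k) ^ n) • w) →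
    ∃ L : M, ∀ n : ℕ, ∃ w : M, L - a n = ((PowerSeries.X : PowerSeries k) ^ n) • w

lemma left_right_inv {M : Type*} [Monoid M] {p q1 q2 : M}
    (h1 : q1 * p = 1) (h2 : p * q2 = 1) : q1 = q2 := by
  calc q1 = q1 * (p * q2) := by rw [h2, mul_one]
    _ = (q1 * p) * q2 := by rw [mul_assoc]
    _ = q2 := by rw [h1, one_mul]

section Aux
variable {k : Type*} [Field k] [CharZero k]
variable {A : Type*} [Ring A] [Algebra (PowerSeries k) A]

lemma two_unit : IsUnit (2 : PowerSeries k) := by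
  rw [PowerSeries.isUnit_iff_constantCoeff]
  rw [map_ofNat]
  exact isUnit_iff_ne_zero.mpr two_ne_zero

lemma sep_halving (hsep : HbarSeparated k A) (d u v : A)
    (h : (2 : PowerSeries k) • d = (PowerSeries.X : PowerSeries k) • (d * u + v * d)) :
    d = 0 := by
  obtain ⟨c2, hc2⟩ := IsUnit.exists_left_inv (two_unit (k := k))
  apply hsep
  intro n
  induction n with
  | zero => exact ⟨d, by simp⟩
  | succ n ih =>
    obtain ⟨w, hw⟩ := ih
    refine ⟨c2 • (w * u + v * w), ?_⟩
    have h1 : (2 : PowerSeries k) • d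
        = ((PowerSeries.X : PowerSeries k) ^ (n+1)) • (w * u + v * w) := by
      rw [h, hw]
      rw [smul_mul_assoc, mul_smul_comm, ← smul_add, ← mul_smul, pow_succ, mul_comm]
    calc d = ((1 : PowerSeries k)) • d := (one_smul _ _).symm
      _ = (c2 * 2) • d := by rw [hc2]
      _ = c2 • ((2 : PowerSeries k) • d) := by rw [mul_smul]
      _ = c2 • (((PowerSeries.X : PowerSeries k) ^ (n+1)) • (w * u + v * w)) := by rw [h1]
      _ = ((PowerSeries.X : PowerSeries k) ^ (n+1)) • (c2 • (w * u + v * w)) := smul_comm _ _ _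

lemma sqrt_unique (hsep : HbarSeparated k A) (a b : A) (h : a * a = b * b)
    (ha : ∃ y, a - 1 = (PowerSeries.X : PowerSeries k) • y)
    (hb : ∃ z, b - 1 = (PowerSeries.X : PowerSeries k) • z) : a = b := by
  obtain ⟨y, hy⟩ := ha
  obtain ⟨z, hz⟩ := hb
  have key : (a - b) * a + b * (a - b) = 0 := by
    have e : (a - b) * a + b * (a - b) = a * a - b * b := by noncomm_ring
    rw [e, h, sub_self]
  have e1 : (a - b) * a + b * (a - b)
      = (2 : PowerSeries k) • (a - b) + ((a - b) * (a - 1) + (b - 1) * (a - b)) := by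
    have h2 : (2 : PowerSeries k) • (a - b) = (a - b) + (a - b) := by
      rw [← one_add_one_eq_two, add_smul, one_smul]
    rw [h2]; noncomm_ring
  have e3 : (2 : PowerSeries k) • (a - b)
      = -((a - b) * (a - 1) + (b - 1) * (a - b)) := by
    rw [e1] at key
    exact eq_neg_of_add_eq_zero_left key
  have h2 : (2 : PowerSeries k) • (a - b)
      = (PowerSeries.X : PowerSeries k) • ((a - b) * (-y) + (-z) * (a - b)) := by
    rw [e3, hy, hz, mul_smul_comm, smul_mul_assoc, ← smul_add, ← smul_neg]
    congr 1
    noncomm_ring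
  have hz0 := sep_halving hsep (a - b) (-y) (-z) h2
  exact sub_eq_zero.mp hz0

lemma comm_of_sq (hsep : HbarSeparated k A) (a c : A) (h : a * a * c = c * (a * a))
    (ha : ∃ y, a - 1 = (PowerSeries.X : PowerSeries k) • y) : a * c = c * a := by
  obtain ⟨y, hy⟩ := ha
  set d := a * c - c * a with hd
  have key : d * a + a * d = 0 := by
    have e : d * a + a * d = a * a * c - c * (a * a) := by rw [hd]; noncomm_ring
    rw [e, h, sub_self]
  have e1 : d * a + a * d
      = (2 : PowerSeries k) • d + (d * (a - 1) + (a - 1) * d) := by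
    have h2 : (2 : PowerSeries k) • d = d + d := by
      rw [← one_add_one_eq_two, add_smul, one_smul]
    rw [h2]; noncomm_ring
  have e3 : (2 : PowerSeries k) • d = -(d * (a - 1) + (a - 1) * d) := by
    rw [e1] at key
    exact eq_neg_of_add_eq_zero_left key
  have h2 : (2 : PowerSeries k) • d
      = (PowerSeries.X : PowerSeries k) • (d * (-y) + (-y) * d) := by
    rw [e3, hy, mul_smul_comm, smul_mul_assoc, ← smul_add, ← smul_neg]
    congr 1
    noncomm_ring
  have hz0 := sep_halving hsep d (-y) (-y) h2
  exact sub_eq_zero.mp hz0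

lemma near1_mul (a b : A)
    (ha : ∃ y, a - 1 = (PowerSeries.X : PowerSeries k) • y)
    (hb : ∃ z, b - 1 = (PowerSeries.X : PowerSeries k) • z) :
    ∃ w, a * b - 1 = (PowerSeries.X : PowerSeries k) • w := by
  obtain ⟨y, hy⟩ := ha
  obtain ⟨z, hz⟩ := hb
  refine ⟨y * b + z, ?_⟩
  have e : a * b - 1 = (a - 1) * b + (b - 1) := by noncomm_ring
  rw [e, hy, hz, smul_mul_assoc, smul_add]

end Aux

namespace CobUntwist
variable (k : Type*) [Field k] (H : Type*) [Ring H] [Bialgebra (PowerSeries k) H]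

local notation "Rk" => PowerSeries k

noncomputable def sg : H ⊗[Rk] H ≃ₐ[Rk] H ⊗[Rk] H := Algebra.TensorProduct.comm Rk H H

noncomputable def assoc' : (H ⊗[Rk] (H ⊗[Rk] H)) ≃ₐ[Rk] ((H ⊗[Rk] H) ⊗[Rk] H) :=
  (Algebra.TensorProduct.assoc Rk Rk Rk H H H).symm

noncomputable def D1 : (H ⊗[Rk] H) →ₐ[Rk] ((H ⊗[Rk] H) ⊗[Rk] H) :=
  Algebra.TensorProduct.map (Bialgebra.comulAlgHom Rk H) (AlgHom.id Rk H)

noncomputable def comulop : H →ₐ[Rk] (H ⊗[Rk] H) :=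
  (sg k H).toAlgHom.comp (Bialgebra.comulAlgHom Rk H)

noncomputable def D1' : (H ⊗[Rk] H) →ₐ[Rk] ((H ⊗[Rk] H) ⊗[Rk] H) :=
  Algebra.TensorProduct.map (comulop k H) (AlgHom.id Rk H)

noncomputable def D2 : (H ⊗[Rk] H) →ₐ[Rk] ((H ⊗[Rk] H) ⊗[Rk] H) :=
  (assoc' k H).toAlgHom.comp
    (Algebra.TensorProduct.map (AlgHom.id Rk H) (Bialgebra.comulAlgHom Rk H))

noncomputable def D2' : (H ⊗[Rk] H) →ₐ[Rk] ((H ⊗[Rk] H) ⊗[Rk] H) :=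
  (assoc' k H).toAlgHom.comp
    (Algebra.TensorProduct.map (AlgHom.id Rk H) (comulop k H))

noncomputable def E1 : (H ⊗[Rk] H) →ₐ[Rk] ((H ⊗[Rk] H) ⊗[Rk] H) :=
  Algebra.TensorProduct.includeLeft

noncomputable def E2 : (H ⊗[Rk] H) →ₐ[Rk] ((H ⊗[Rk] H) ⊗[Rk] H) :=
  (assoc' k H).toAlgHom.comp Algebra.TensorProduct.includeRight

noncomputable def tau : ((H ⊗[Rk] H) ⊗[Rk] H) ≃ₐ[Rk] ((H ⊗[Rk] H) ⊗[Rk] H) :=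
  ((Algebra.TensorProduct.comm Rk (H ⊗[Rk] H) H).trans
    (Algebra.TensorProduct.congr AlgEquiv.refl (sg k H))).trans (assoc' k H)

noncomputable def phiA : (H ⊗[Rk] H) →ₐ[Rk] H :=
  (Algebra.TensorProduct.lid Rk H).toAlgHom.comp
    (Algebra.TensorProduct.map (Bialgebra.counitAlgHom Rk H) (AlgHom.id Rk H))

noncomputable def psiA : (H ⊗[Rk] H) →ₐ[Rk] H :=
  (Algebra.TensorProduct.rid Rk Rk H).toAlgHom.comp
    (Algebra.TensorProduct.map (AlgHom.id Rk H) (Bialgebra.counitAlgHom Rk H))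

lemma sg_tmul (a b : H) : sg k H (a ⊗ₜ[Rk] b) = b ⊗ₜ[Rk] a :=
  Algebra.TensorProduct.comm_tmul Rk a b

lemma sg_sg (z : H ⊗[Rk] H) : sg k H (sg k H z) = z := by
  induction z using TensorProduct.induction_on with
  | zero => simp
  | tmul a b => rw [sg_tmul, sg_tmul]
  | add x y hx hy => rw [map_add, map_add, hx, hy]

lemma tau_tmul (x y z : H) : tau k H ((x ⊗ₜ[Rk] y) ⊗ₜ[Rk] z) = (z ⊗ₜ[Rk] y) ⊗ₜ[Rk] x := by
  simp [tau, assoc', sg, Algebra.TensorProduct.congr_apply,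
    Algebra.TensorProduct.assoc_symm_tmul]

lemma hD1_eq (z : H ⊗[Rk] H) :
    LinearMap.rTensor H (comul (R := PowerSeries k)) z = D1 k H z := by
  induction z using TensorProduct.induction_on with
  | zero => simp
  | tmul a b => simp [D1]
  | add x y hx hy => rw [map_add, map_add, hx, hy]

lemma hD2_eq (z : H ⊗[Rk] H) :
    (Algebra.TensorProduct.assoc Rk Rk Rk H H H).symm (LinearMap.lTensor H (comul (R := PowerSeries k)) z)
      = D2 k H z := by
  induction z using TensorProduct.induction_on with
  | zero => simp
  | tmul a b => simp [D2, assoc']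
  | add x y hx hy => rw [map_add, map_add, map_add, hx, hy]

lemma hE1_eq (z : H ⊗[Rk] H) : z ⊗ₜ[Rk] (1 : H) = E1 k H z := rfl

lemma hE2_eq (z : H ⊗[Rk] H) :
    (Algebra.TensorProduct.assoc Rk Rk Rk H H H).symm ((1 : H) ⊗ₜ[Rk] z) = E2 k H z := rfl

lemma hphi_eq (z : H ⊗[Rk] H) :
    TensorProduct.lid Rk H (LinearMap.rTensor H (counit (R := PowerSeries k)) z) = phiA k H z := by
  induction z using TensorProduct.induction_on with
  | zero => rw [LinearMap.map_zero, LinearEquiv.map_zero, map_zero]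
  | tmul a b => simp [phiA]
  | add x y hx hy => rw [LinearMap.map_add, LinearEquiv.map_add, map_add, hx, hy]

lemma hpsi_eq (z : H ⊗[Rk] H) :
    TensorProduct.rid (PowerSeries k) H (LinearMap.lTensor H (counit (R := PowerSeries k)) z)
      = psiA k H z := by
  induction z using TensorProduct.induction_on with
  | zero => rw [LinearMap.map_zero, LinearEquiv.map_zero, map_zero]
  | tmul a b => simp [psiA, Algebra.TensorProduct.rid_tmul]
  | add x y hx hy => rw [LinearMap.map_add, LinearEquiv.map_add, map_add, hx, hy]

lemma hphi_sg (z : H ⊗[Rk] H) : phiA k H (sg k H z) = psiA k H z := by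
  induction z using TensorProduct.induction_on with
  | zero => simp
  | tmul a b => simp [phiA, psiA, sg_tmul, Algebra.TensorProduct.rid_tmul]
  | add x y hx hy => rw [map_add, map_add, map_add, hx, hy]


lemma comulop_apply (x : H) : comulop k H x = sg k H (comul (R := PowerSeries k) x) := rfl

lemma helper1 (u : H ⊗[Rk] H) (b : H) :
    tau k H (u ⊗ₜ[Rk] b) = assoc' k H (b ⊗ₜ[Rk] sg k H u) := by
  induction u using TensorProduct.induction_on with
  | zero => rw [TensorProduct.zero_tmul, map_zero, map_zero, TensorProduct.tmul_zero, map_zero]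
  | tmul x y =>
      rw [tau_tmul, sg_tmul]
      exact (Algebra.TensorProduct.assoc_symm_tmul (R := Rk) (S := Rk) (T := Rk) (a := b) (b := y) (c := x)).symm
  | add x y hx hy =>
      rw [TensorProduct.add_tmul, map_add, hx, hy, map_add, TensorProduct.tmul_add, map_add]

lemma helper2 (a : H) (u : H ⊗[Rk] H) :
    tau k H (assoc' k H (a ⊗ₜ[Rk] u)) = (sg k H u) ⊗ₜ[Rk] a := by
  induction u using TensorProduct.induction_on with
  | zero => rw [TensorProduct.tmul_zero, map_zero, map_zero, map_zero, TensorProduct.zero_tmul]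
  | tmul x y =>
      show tau k H ((Algebra.TensorProduct.assoc Rk Rk Rk H H H).symm (a ⊗ₜ[Rk] (x ⊗ₜ[Rk] y))) = _
      rw [Algebra.TensorProduct.assoc_symm_tmul, tau_tmul, sg_tmul]
  | add x y hx hy =>
      rw [TensorProduct.tmul_add, map_add, map_add, hx, hy, map_add, TensorProduct.add_tmul]

lemma tau_E1 (z : H ⊗[Rk] H) : tau k H (E1 k H z) = E2 k H (sg k H z) := by
  rw [← hE1_eq, helper1, ← hE2_eq]
  rfl

lemma tau_E2 (z : H ⊗[Rk] H) : tau k H (E2 k H z) = E1 k H (sg k H z) := by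
  rw [← hE2_eq]
  show tau k H (assoc' k H ((1:H) ⊗ₜ[Rk] z)) = _
  rw [helper2, ← hE1_eq]

lemma tau_D1 (z : H ⊗[Rk] H) : tau k H (D1 k H z) = D2' k H (sg k H z) := by
  induction z using TensorProduct.induction_on with
  | zero => rw [map_zero, map_zero, map_zero, map_zero]
  | tmul a b =>
      have h1 : D1 k H (a ⊗ₜ[Rk] b) = (comul (R := PowerSeries k) a) ⊗ₜ[Rk] b := by
        simp [D1]
      have h2 : D2' k H (sg k H (a ⊗ₜ[Rk] b))
          = assoc' k H (b ⊗ₜ[Rk] (sg k H (comul (R := PowerSeries k) a))) := by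
        rw [sg_tmul]
        simp [D2', comulop_apply]
      rw [h1, helper1, h2]
  | add x y hx hy => rw [map_add, map_add, map_add, map_add, hx, hy]

lemma tau_D2 (z : H ⊗[Rk] H) : tau k H (D2 k H z) = D1' k H (sg k H z) := by
  induction z using TensorProduct.induction_on with
  | zero => rw [map_zero, map_zero, map_zero, map_zero]
  | tmul a b =>
      have h1 : D2 k H (a ⊗ₜ[Rk] b)
          = assoc' k H (a ⊗ₜ[Rk] (comul (R := PowerSeries k) b)) := by
        simp [D2]
      have h2 : D1' k H (sg k H (a ⊗ₜ[Rk] b))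
          = (sg k H (comul (R := PowerSeries k) b)) ⊗ₜ[Rk] a := by
        rw [sg_tmul]
        simp [D1', comulop_apply]
      rw [h1, helper2, h2]
  | add x y hx hy => rw [map_add, map_add, map_add, map_add, hx, hy]

lemma hc1 (w : H ⊗[Rk] H) (hw : ∀ x : H, w * comul (R := PowerSeries k) x
      = comul (R := PowerSeries k) x * w) (t : H ⊗[Rk] H) :
    E1 k H w * D1 k H t = D1 k H t * E1 k H w := by
  induction t using TensorProduct.induction_on with
  | zero => rw [map_zero, mul_zero, zero_mul]
  | tmul a b =>
      rw [← hE1_eq]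
      have h1 : D1 k H (a ⊗ₜ[Rk] b) = (comul (R := PowerSeries k) a) ⊗ₜ[Rk] b := by
        simp [D1]
      rw [h1, Algebra.TensorProduct.tmul_mul_tmul, Algebra.TensorProduct.tmul_mul_tmul,
        hw a, one_mul, mul_one]
  | add x y hx hy => rw [map_add, mul_add, add_mul, hx, hy]

lemma hc2 (w : H ⊗[Rk] H) (hw : ∀ x : H, w * comul (R := PowerSeries k) x
      = comul (R := PowerSeries k) x * w) (t : H ⊗[Rk] H) :
    E2 k H w * D2 k H t = D2 k H t * E2 k H w := by
  induction t using TensorProduct.induction_on with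
  | zero => rw [map_zero, mul_zero, zero_mul]
  | tmul a b =>
      have h1 : D2 k H (a ⊗ₜ[Rk] b)
          = assoc' k H (a ⊗ₜ[Rk] (comul (R := PowerSeries k) b)) := by
        simp [D2]
      have h2 : E2 k H w = assoc' k H ((1:H) ⊗ₜ[Rk] w) := rfl
      rw [h1, h2, ← map_mul, ← map_mul, Algebra.TensorProduct.tmul_mul_tmul,
        Algebra.TensorProduct.tmul_mul_tmul, hw b, one_mul, mul_one]
  | add x y hx hy => rw [map_add, mul_add, add_mul, hx, hy]

lemma hconjD1 (g : H ⊗[Rk] H)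
    (hg : ∀ x : H, g * comul (R := PowerSeries k) x
      = sg k H (comul (R := PowerSeries k) x) * g) (t : H ⊗[Rk] H) :
    E1 k H g * D1 k H t = D1' k H t * E1 k H g := by
  induction t using TensorProduct.induction_on with
  | zero => rw [map_zero, mul_zero, map_zero, zero_mul]
  | tmul a b =>
      rw [← hE1_eq]
      have h1 : D1 k H (a ⊗ₜ[Rk] b) = (comul (R := PowerSeries k) a) ⊗ₜ[Rk] b := by
        simp [D1]
      have h2 : D1' k H (a ⊗ₜ[Rk] b)
          = (sg k H (comul (R := PowerSeries k) a)) ⊗ₜ[Rk] b := by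
        simp [D1', comulop_apply]
      rw [h1, h2, Algebra.TensorProduct.tmul_mul_tmul, Algebra.TensorProduct.tmul_mul_tmul,
        hg a, one_mul, mul_one]
  | add x y hx hy => rw [map_add, mul_add, map_add, add_mul, hx, hy]

lemma hconjD2 (g : H ⊗[Rk] H)
    (hg : ∀ x : H, g * comul (R := PowerSeries k) x
      = sg k H (comul (R := PowerSeries k) x) * g) (t : H ⊗[Rk] H) :
    E2 k H g * D2 k H t = D2' k H t * E2 k H g := by
  induction t using TensorProduct.induction_on with
  | zero => rw [map_zero, mul_zero, map_zero, zero_mul]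
  | tmul a b =>
      have h1 : D2 k H (a ⊗ₜ[Rk] b)
          = assoc' k H (a ⊗ₜ[Rk] (comul (R := PowerSeries k) b)) := by
        simp [D2]
      have h2 : D2' k H (a ⊗ₜ[Rk] b)
          = assoc' k H (a ⊗ₜ[Rk] (sg k H (comul (R := PowerSeries k) b))) := by
        simp [D2', comulop_apply]
      have h3 : E2 k H g = assoc' k H ((1:H) ⊗ₜ[Rk] g) := rfl
      rw [h1, h2, h3, ← map_mul, ← map_mul, Algebra.TensorProduct.tmul_mul_tmul,
        Algebra.TensorProduct.tmul_mul_tmul, hg b, one_mul, mul_one]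
  | add x y hx hy => rw [map_add, mul_add, map_add, add_mul, hx, hy]

end CobUntwist

set_option maxHeartbeats 1000000 in
set_option synthInstance.maxHeartbeats 200000 in
open CobUntwist in
/-- Untwisting a coboundary quantum group: if `G'` is a counital
cocycle twist of a topologically free bialgebra `H` over `k[[ħ]]` with `G' ≡ 1 mod ħ`
and `Ad(G')∘Δ = Δ²¹`, then `G := G'·𝒢^{-1/2}` (where `𝒢 = (G')²¹·G'`) is again a
counital cocycle twist with `Ad(G)∘Δ = Δ²¹`, and moreover `G·G²¹ = G²¹·G = 1`. -/
theorem coboundary_untwisting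
    (k : Type*) [Field k] [CharZero k]
    (H : Type*) [Ring H] [Bialgebra (PowerSeries k) H]
    -- topological freeness: `ħ`-adic separatedness and completeness of `H`,
    -- `H ⊗̂ H` and `H ⊗̂ H ⊗̂ H`
    (hsepH : HbarSeparated k H) (hcompH : HbarComplete k H)
    (hsep2 : HbarSeparated k (H ⊗[PowerSeries k] H))
    (hcomp2 : HbarComplete k (H ⊗[PowerSeries k] H))
    (hsep3 : HbarSeparated k ((H ⊗[PowerSeries k] H) ⊗[PowerSeries k] H))
    (hcomp3 : HbarComplete k ((H ⊗[PowerSeries k] H) ⊗[PowerSeries k] H))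
    (G' G'inv : H ⊗[PowerSeries k] H)
    (hG'inv1 : G' * G'inv = 1) (hG'inv2 : G'inv * G' = 1)
    -- `G' ≡ 1⊗1 mod ħ`
    (hG'1 : ∃ y : H ⊗[PowerSeries k] H,
      G' - 1 = (PowerSeries.X : PowerSeries k) • y)
    -- counit conditions
    (hG'coun1 : (TensorProduct.lid (PowerSeries k) H)
        (LinearMap.rTensor H (counit (R := PowerSeries k)) G') = 1)
    (hG'coun2 : (TensorProduct.rid (PowerSeries k) H)
        (LinearMap.lTensor H (counit (R := PowerSeries k)) G') = 1)
    -- cocycle equation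
    (hG'coc : (G' ⊗ₜ[PowerSeries k] (1 : H))
          * (LinearMap.rTensor H (comul (R := PowerSeries k)) G')
        = (Algebra.TensorProduct.assoc (PowerSeries k) (PowerSeries k) (PowerSeries k) H H H).symm
            ((1 : H) ⊗ₜ[PowerSeries k] G')
          * (Algebra.TensorProduct.assoc (PowerSeries k) (PowerSeries k) (PowerSeries k) H H H).symm
              (LinearMap.lTensor H (comul (R := PowerSeries k)) G'))
    -- `Ad(G') ∘ Δ = Δ²¹`
    (hG'ad : ∀ x : H, G' * comul (R := PowerSeries k) x * G'inv
        = (Algebra.TensorProduct.comm (PowerSeries k) H H)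
            (comul (R := PowerSeries k) x))
    -- `s = 𝒢^{-1/2}`: the square root of `𝒢⁻¹ = ((G')²¹·G')⁻¹` congruent to `1 mod ħ`
    (s : H ⊗[PowerSeries k] H)
    (hs1 : ∃ y : H ⊗[PowerSeries k] H,
      s - 1 = (PowerSeries.X : PowerSeries k) • y)
    (hs2 : s * s * ((Algebra.TensorProduct.comm (PowerSeries k) H H) G' * G') = 1)
    (hs2' : ((Algebra.TensorProduct.comm (PowerSeries k) H H) G' * G') * (s * s) = 1) :
    (let G : H ⊗[PowerSeries k] H := G' * s;
     ∃ Ginv : H ⊗[PowerSeries k] H,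
      (G * Ginv = 1 ∧ Ginv * G = 1) ∧
      ((TensorProduct.lid (PowerSeries k) H)
          (LinearMap.rTensor H (counit (R := PowerSeries k)) G) = 1 ∧
       (TensorProduct.rid (PowerSeries k) H)
          (LinearMap.lTensor H (counit (R := PowerSeries k)) G) = 1) ∧
      ((G ⊗ₜ[PowerSeries k] (1 : H))
          * (LinearMap.rTensor H (comul (R := PowerSeries k)) G)
        = (Algebra.TensorProduct.assoc (PowerSeries k) (PowerSeries k) (PowerSeries k) H H H).symm
            ((1 : H) ⊗ₜ[PowerSeries k] G)
          * (Algebra.TensorProduct.assoc (PowerSeries k) (PowerSeries k) (PowerSeries k) H H H).symm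
              (LinearMap.lTensor H (comul (R := PowerSeries k)) G)) ∧
      (∀ x : H, G * comul (R := PowerSeries k) x * Ginv
          = (Algebra.TensorProduct.comm (PowerSeries k) H H)
              (comul (R := PowerSeries k) x)) ∧
      (G * (Algebra.TensorProduct.comm (PowerSeries k) H H) G = 1 ∧
       (Algebra.TensorProduct.comm (PowerSeries k) H H) G * G = 1)) := by
  intro G
  have hGdef : G = G' * s := rfl
  clear_value G
  subst hGdef
  obtain ⟨sy, hsy⟩ := hs1
  obtain ⟨gy, hgy⟩ := hG'1
  have hsg_stmt : ∀ z : H ⊗[PowerSeries k] H,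
      (Algebra.TensorProduct.comm (PowerSeries k) H H) z = sg k H z := fun _ => rfl
  simp only [hsg_stmt] at hs2 hs2' hG'ad ⊢
  -- basic facts about the flip
  have cm_cm : ∀ z : H ⊗[PowerSeries k] H, sg k H (sg k H z) = z := sg_sg k H
  have hσG'i1 : sg k H G' * sg k H G'inv = 1 := by
    rw [← map_mul, hG'inv1, map_one]
  have hσG'i2 : sg k H G'inv * sg k H G' = 1 := by
    rw [← map_mul, hG'inv2, map_one]
  -- 𝒢 and its inverse
  set Gb := sg k H G' * G' with hGb
  set Gb' := G' * sg k H G' with hGb'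
  set Gbi := G'inv * sg k H G'inv with hGbi
  have hGbGbi : Gb * Gbi = 1 := by
    have e : Gb * Gbi = sg k H G' * ((G' * G'inv) * sg k H G'inv) := by
      rw [hGb, hGbi]; simp only [mul_assoc]
    rw [e, hG'inv1, one_mul, hσG'i1]
  have hGbiGb : Gbi * Gb = 1 := by
    have e : Gbi * Gb = G'inv * ((sg k H G'inv * sg k H G') * G') := by
      rw [hGb, hGbi]; simp only [mul_assoc]
    rw [e, hσG'i2, one_mul, hG'inv2]
  have hσGb : sg k H Gb = Gb' := by
    rw [hGb, hGb', map_mul, cm_cm]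
  -- inverse of s
  have hsR : s * (s * Gb) = 1 := by rw [← mul_assoc]; exact hs2
  have hsL : (Gb * s) * s = 1 := by rw [mul_assoc]; exact hs2'
  have hscommGb : Gb * s = s * Gb := by
    calc Gb * s = (Gb * s) * (s * (s * Gb)) := by rw [hsR, mul_one]
      _ = ((Gb * s) * s) * (s * Gb) := by simp only [mul_assoc]
      _ = s * Gb := by rw [hsL, one_mul]
  have hsi2 : (s * Gb) * s = 1 := by rw [← hscommGb]; exact hsL
  -- s * s = 𝒢⁻¹
  have hss_eq : s * s = Gbi := left_right_inv hs2 hGbGbi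
  -- 𝒢 commutes with the coproduct
  have hGbcomul : ∀ x : H, Gb * comul (R := PowerSeries k) x
      = comul (R := PowerSeries k) x * Gb := by
    intro x
    have h1 := hG'ad x
    have h2 : sg k H G' * sg k H (comul (R := PowerSeries k) x) * sg k H G'inv
        = comul (R := PowerSeries k) x := by
      have h0 := congrArg (sg k H) h1
      rw [map_mul, map_mul, cm_cm] at h0
      exact h0
    have h3 : sg k H G' * (G' * comul (R := PowerSeries k) x * G'inv) * sg k H G'inv
        = comul (R := PowerSeries k) x := by rw [h1]; exact h2
    have h4 : Gb * comul (R := PowerSeries k) x * Gbi = comul (R := PowerSeries k) x := by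
      have e : Gb * comul (R := PowerSeries k) x * Gbi
          = sg k H G' * (G' * comul (R := PowerSeries k) x * G'inv) * sg k H G'inv := by
        rw [hGb, hGbi]; simp only [mul_assoc]
      rw [e]; exact h3
    calc Gb * comul (R := PowerSeries k) x
        = Gb * comul (R := PowerSeries k) x * (Gbi * Gb) := by rw [hGbiGb, mul_one]
      _ = (Gb * comul (R := PowerSeries k) x * Gbi) * Gb := by simp only [mul_assoc]
      _ = comul (R := PowerSeries k) x * Gb := by rw [h4]
  have hGbicomul : ∀ x : H, Gbi * comul (R := PowerSeries k) x
      = comul (R := PowerSeries k) x * Gbi := by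
    intro x
    calc Gbi * comul (R := PowerSeries k) x
        = Gbi * comul (R := PowerSeries k) x * (Gb * Gbi) := by rw [hGbGbi, mul_one]
      _ = Gbi * (comul (R := PowerSeries k) x * Gb) * Gbi := by simp only [mul_assoc]
      _ = Gbi * (Gb * comul (R := PowerSeries k) x) * Gbi := by rw [hGbcomul]
      _ = (Gbi * Gb) * (comul (R := PowerSeries k) x * Gbi) := by simp only [mul_assoc]
      _ = comul (R := PowerSeries k) x * Gbi := by rw [hGbiGb, one_mul]
  -- s commutes with the coproduct
  have hscomul : ∀ x : H, s * comul (R := PowerSeries k) x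
      = comul (R := PowerSeries k) x * s := by
    intro x
    apply comm_of_sq hsep2 s (comul (R := PowerSeries k) x) _ ⟨sy, hsy⟩
    rw [hss_eq]; exact hGbicomul x
  -- KEY: s * σ(G') = σ(G') * σ(s)
  have hkey : s * sg k H G' = sg k H G' * sg k H s := by
    have hanear : sg k H G'inv * s * sg k H G' - 1
        = (PowerSeries.X : PowerSeries k) • (sg k H G'inv * sy * sg k H G') := by
      have e : sg k H G'inv * s * sg k H G' - 1
          = sg k H G'inv * (s - 1) * sg k H G' + (sg k H G'inv * sg k H G' - 1) := by
        simp only [mul_sub, sub_mul, mul_one, one_mul, mul_assoc]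
        abel
      rw [e, hsy, hσG'i2, sub_self, add_zero, mul_smul_comm, smul_mul_assoc]
    have hσsnear : sg k H s - 1 = (PowerSeries.X : PowerSeries k) • sg k H sy := by
      rw [← map_one (sg k H), ← map_sub, hsy, map_smul]
    have haa : (sg k H G'inv * s * sg k H G') * (sg k H G'inv * s * sg k H G')
        = sg k H G'inv * (s * s) * sg k H G' := by
      have e : (sg k H G'inv * s * sg k H G') * (sg k H G'inv * s * sg k H G')
          = sg k H G'inv * (s * ((sg k H G' * sg k H G'inv) * s)) * sg k H G' := by
        simp only [mul_assoc]
      rw [e, hσG'i1, one_mul, ← mul_assoc]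
    have h5 : (sg k H G'inv * (s * s) * sg k H G') * Gb' = 1 := by
      have e : (sg k H G'inv * (s * s) * sg k H G') * Gb'
          = sg k H G'inv * (((s * s) * Gb) * sg k H G') := by
        rw [hGb, hGb']; simp only [mul_assoc]
      rw [e, hs2, one_mul, hσG'i2]
    have h6 : Gb' * (sg k H G'inv * (s * s) * sg k H G') = 1 := by
      have e : Gb' * (sg k H G'inv * (s * s) * sg k H G')
          = G' * ((sg k H G' * sg k H G'inv) * ((s * s) * sg k H G')) := by
        rw [hGb']; simp only [mul_assoc]
      rw [e, hσG'i1, one_mul, hss_eq]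
      have e2 : G' * (Gbi * sg k H G') = (G' * G'inv) * (sg k H G'inv * sg k H G') := by
        rw [hGbi]; simp only [mul_assoc]
      rw [e2, hG'inv1, one_mul, hσG'i2]
    have hσss2 : Gb' * (sg k H s * sg k H s) = 1 := by
      rw [← hσGb, ← map_mul, ← map_mul, hs2', map_one]
    have haσs : sg k H G'inv * (s * s) * sg k H G' = sg k H s * sg k H s :=
      left_right_inv h5 hσss2
    have ha_eq : sg k H G'inv * s * sg k H G' = sg k H s := by
      apply sqrt_unique hsep2 _ _ _ ⟨sg k H G'inv * sy * sg k H G', hanear⟩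
        ⟨sg k H sy, hσsnear⟩
      rw [haa]; exact haσs
    calc s * sg k H G'
        = (sg k H G' * sg k H G'inv) * (s * sg k H G') := by rw [hσG'i1, one_mul]
      _ = sg k H G' * (sg k H G'inv * s * sg k H G') := by simp only [mul_assoc]
      _ = sg k H G' * sg k H s := by rw [ha_eq]
  have hkey2 : sg k H s * G' = G' * s := by
    have h0 := congrArg (sg k H) hkey
    rw [map_mul, map_mul, cm_cm, cm_cm] at h0
    exact h0
  -- the inverse of G
  refine ⟨(s * Gb) * G'inv, ⟨?_, ?_⟩, ⟨?_, ?_⟩, ?_, ?_, ?_, ?_⟩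
  · -- G * Ginv = 1
    calc G' * s * ((s * Gb) * G'inv) = G' * ((s * (s * Gb)) * G'inv) := by simp only [mul_assoc]
      _ = 1 := by rw [hsR, one_mul, hG'inv1]
  · -- Ginv * G = 1
    calc (s * Gb) * G'inv * (G' * s) = (s * Gb) * ((G'inv * G') * s) := by simp only [mul_assoc]
      _ = 1 := by rw [hG'inv2, one_mul, hsi2]
  · -- counit 1
    rw [hphi_eq]
    have hφG' : phiA k H G' = 1 := by rw [← hphi_eq]; exact hG'coun1
    have hψG' : psiA k H G' = 1 := by rw [← hpsi_eq]; exact hG'coun2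
    have hφGb : phiA k H Gb = 1 := by
      rw [hGb, map_mul, hφG', mul_one, hphi_sg, hψG']
    have hφs : phiA k H s = 1 := by
      apply sqrt_unique hsepH _ _ _ ?_ ⟨0, by simp⟩
      · have h0 := congrArg (phiA k H) hs2
        rw [map_mul, map_mul, hφGb, mul_one, map_one] at h0
        rw [h0, one_mul]
      · refine ⟨phiA k H sy, ?_⟩
        rw [← map_one (phiA k H), ← map_sub, hsy, map_smul]
    rw [map_mul, hφG', hφs, mul_one]
  · -- counit 2
    rw [hpsi_eq]
    have hφG' : phiA k H G' = 1 := by rw [← hphi_eq]; exact hG'coun1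
    have hψG' : psiA k H G' = 1 := by rw [← hpsi_eq]; exact hG'coun2
    have hψσG' : psiA k H (sg k H G') = phiA k H G' := by
      have h0 := hphi_sg k H (sg k H G')
      rw [cm_cm] at h0
      exact h0.symm
    have hψGb : psiA k H Gb = 1 := by
      rw [hGb, map_mul, hψσG', hφG', hψG', mul_one]
    have hψs : psiA k H s = 1 := by
      apply sqrt_unique hsepH _ _ _ ?_ ⟨0, by simp⟩
      · have h0 := congrArg (psiA k H) hs2
        rw [map_mul, map_mul, hψGb, mul_one, map_one] at h0
        rw [h0, one_mul]
      · refine ⟨psiA k H sy, ?_⟩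
        rw [← map_one (psiA k H), ← map_sub, hsy, map_smul]
    rw [map_mul, hψG', hψs, mul_one]
  · -- cocycle equation
    rw [hD1_eq, hD2_eq, hE1_eq, hE2_eq] at hG'coc ⊢
    -- Ad(G') in the one-sided form
    have hG'ad' : ∀ x : H, G' * comul (R := PowerSeries k) x
        = sg k H (comul (R := PowerSeries k) x) * G' := by
      intro x
      calc G' * comul (R := PowerSeries k) x
          = (G' * comul (R := PowerSeries k) x) * (G'inv * G') := by rw [hG'inv2, mul_one]
        _ = (G' * comul (R := PowerSeries k) x * G'inv) * G' := by simp only [mul_assoc]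
        _ = sg k H (comul (R := PowerSeries k) x) * G' := by rw [hG'ad x]
    -- τ of the cocycle for G'
    have htau := congrArg (tau k H) hG'coc
    rw [map_mul, map_mul, tau_E1, tau_D1, tau_E2, tau_D2] at htau
    -- cocycle for 𝒢
    have hcocGb : E1 k H Gb * D1 k H Gb = E2 k H Gb * D2 k H Gb := by
      rw [hGb, map_mul, map_mul, map_mul, map_mul]
      calc E1 k H (sg k H G') * E1 k H G' * (D1 k H (sg k H G') * D1 k H G')
          = E1 k H (sg k H G') * (E1 k H G' * D1 k H (sg k H G')) * D1 k H G' := by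
            simp only [mul_assoc]
        _ = E1 k H (sg k H G') * (D1' k H (sg k H G') * E1 k H G') * D1 k H G' := by
            rw [hconjD1 k H G' hG'ad' (sg k H G')]
        _ = (E1 k H (sg k H G') * D1' k H (sg k H G')) * (E1 k H G' * D1 k H G') := by
            simp only [mul_assoc]
        _ = (E2 k H (sg k H G') * D2' k H (sg k H G')) * (E2 k H G' * D2 k H G') := by
            rw [← htau, hG'coc]
        _ = E2 k H (sg k H G') * (D2' k H (sg k H G') * E2 k H G') * D2 k H G' := by
            simp only [mul_assoc]
        _ = E2 k H (sg k H G') * (E2 k H G' * D2 k H (sg k H G')) * D2 k H G' := by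
            rw [← hconjD2 k H G' hG'ad' (sg k H G')]
        _ = E2 k H (sg k H G') * E2 k H G' * (D2 k H (sg k H G') * D2 k H G') := by
            simp only [mul_assoc]
    -- cocycle for 𝒢⁻¹
    have hcocGbi : E1 k H Gbi * D1 k H Gbi = E2 k H Gbi * D2 k H Gbi := by
      apply left_right_inv (p := E1 k H Gb * D1 k H Gb)
      · calc E1 k H Gbi * D1 k H Gbi * (E1 k H Gb * D1 k H Gb)
            = E1 k H Gbi * (D1 k H Gbi * E1 k H Gb) * D1 k H Gb := by simp only [mul_assoc]
          _ = E1 k H Gbi * (E1 k H Gb * D1 k H Gbi) * D1 k H Gb := by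
              rw [hc1 k H Gb hGbcomul Gbi]
          _ = (E1 k H Gbi * E1 k H Gb) * (D1 k H Gbi * D1 k H Gb) := by simp only [mul_assoc]
          _ = 1 := by
              rw [← map_mul, ← map_mul, hGbiGb, map_one, map_one, one_mul]
      · rw [hcocGb]
        calc E2 k H Gb * D2 k H Gb * (E2 k H Gbi * D2 k H Gbi)
            = E2 k H Gb * (D2 k H Gb * E2 k H Gbi) * D2 k H Gbi := by simp only [mul_assoc]
          _ = E2 k H Gb * (E2 k H Gbi * D2 k H Gb) * D2 k H Gbi := by
              rw [← hc2 k H Gbi hGbicomul Gb]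
          _ = (E2 k H Gb * E2 k H Gbi) * (D2 k H Gb * D2 k H Gbi) := by simp only [mul_assoc]
          _ = 1 := by
              rw [← map_mul, ← map_mul, hGbGbi, map_one, map_one, one_mul]
    -- L = R via uniqueness of square roots
    have hLL : (E1 k H s * D1 k H s) * (E1 k H s * D1 k H s)
        = E1 k H Gbi * D1 k H Gbi := by
      calc (E1 k H s * D1 k H s) * (E1 k H s * D1 k H s)
          = E1 k H s * (D1 k H s * E1 k H s) * D1 k H s := by simp only [mul_assoc]
        _ = E1 k H s * (E1 k H s * D1 k H s) * D1 k H s := by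
            rw [hc1 k H s hscomul s]
        _ = (E1 k H s * E1 k H s) * (D1 k H s * D1 k H s) := by simp only [mul_assoc]
        _ = E1 k H Gbi * D1 k H Gbi := by rw [← map_mul, ← map_mul, hss_eq]
    have hRR : (E2 k H s * D2 k H s) * (E2 k H s * D2 k H s)
        = E2 k H Gbi * D2 k H Gbi := by
      calc (E2 k H s * D2 k H s) * (E2 k H s * D2 k H s)
          = E2 k H s * (D2 k H s * E2 k H s) * D2 k H s := by simp only [mul_assoc]
        _ = E2 k H s * (E2 k H s * D2 k H s) * D2 k H s := by
            rw [hc2 k H s hscomul s]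
        _ = (E2 k H s * E2 k H s) * (D2 k H s * D2 k H s) := by simp only [mul_assoc]
        _ = E2 k H Gbi * D2 k H Gbi := by rw [← map_mul, ← map_mul, hss_eq]
    have hE1near : E1 k H s - 1 = (PowerSeries.X : PowerSeries k) • E1 k H sy := by
      rw [← map_one (E1 k H), ← map_sub, hsy, map_smul]
    have hD1near : D1 k H s - 1 = (PowerSeries.X : PowerSeries k) • D1 k H sy := by
      rw [← map_one (D1 k H), ← map_sub, hsy, map_smul]
    have hE2near : E2 k H s - 1 = (PowerSeries.X : PowerSeries k) • E2 k H sy := by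
      rw [← map_one (E2 k H), ← map_sub, hsy, map_smul]
    have hD2near : D2 k H s - 1 = (PowerSeries.X : PowerSeries k) • D2 k H sy := by
      rw [← map_one (D2 k H), ← map_sub, hsy, map_smul]
    have hLR : E1 k H s * D1 k H s = E2 k H s * D2 k H s := by
      apply sqrt_unique hsep3 _ _ _
        (near1_mul _ _ ⟨E1 k H sy, hE1near⟩ ⟨D1 k H sy, hD1near⟩)
        (near1_mul _ _ ⟨E2 k H sy, hE2near⟩ ⟨D2 k H sy, hD2near⟩)
      rw [hLL, hRR, hcocGbi]
    -- assemble
    rw [map_mul, map_mul, map_mul, map_mul]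
    calc E1 k H G' * E1 k H s * (D1 k H G' * D1 k H s)
        = E1 k H G' * (E1 k H s * D1 k H G') * D1 k H s := by simp only [mul_assoc]
      _ = E1 k H G' * (D1 k H G' * E1 k H s) * D1 k H s := by
          rw [hc1 k H s hscomul G']
      _ = (E1 k H G' * D1 k H G') * (E1 k H s * D1 k H s) := by simp only [mul_assoc]
      _ = (E2 k H G' * D2 k H G') * (E2 k H s * D2 k H s) := by rw [hG'coc, hLR]
      _ = E2 k H G' * (D2 k H G' * E2 k H s) * D2 k H s := by simp only [mul_assoc]
      _ = E2 k H G' * (E2 k H s * D2 k H G') * D2 k H s := by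
          rw [← hc2 k H s hscomul G']
      _ = E2 k H G' * E2 k H s * (D2 k H G' * D2 k H s) := by simp only [mul_assoc]
  · -- Ad(G) = Δ²¹
    intro x
    calc G' * s * comul (R := PowerSeries k) x * ((s * Gb) * G'inv)
        = G' * (s * comul (R := PowerSeries k) x) * ((s * Gb) * G'inv) := by simp only [mul_assoc]
      _ = G' * (comul (R := PowerSeries k) x * s) * ((s * Gb) * G'inv) := by
          rw [hscomul x]
      _ = G' * comul (R := PowerSeries k) x * ((s * (s * Gb)) * G'inv) := by simp only [mul_assoc]
      _ = G' * comul (R := PowerSeries k) x * G'inv := by rw [hsR, one_mul]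
      _ = sg k H (comul (R := PowerSeries k) x) := hG'ad x
  · -- G * σ(G) = 1
    rw [map_mul]
    calc G' * s * (sg k H G' * sg k H s)
        = G' * (s * sg k H G') * sg k H s := by simp only [mul_assoc]
      _ = G' * (sg k H G' * sg k H s) * sg k H s := by rw [hkey]
      _ = (G' * sg k H G') * (sg k H s * sg k H s) := by simp only [mul_assoc]
      _ = sg k H (Gb * (s * s)) := by
          rw [hGb, map_mul, map_mul, map_mul, cm_cm]
      _ = 1 := by rw [hs2', map_one]
  · -- σ(G) * G = 1
    rw [map_mul]
    calc sg k H G' * sg k H s * (G' * s)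
        = sg k H G' * (sg k H s * G') * s := by simp only [mul_assoc]
      _ = sg k H G' * (G' * s) * s := by rw [hkey2]
      _ = (sg k H G' * G') * (s * s) := by simp only [mul_assoc]
      _ = Gb * (s * s) := by rw [hGb]
      _ = 1 := hs2'
end
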